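/- arXiv:2603.15845 — 11 statements merged into one kernel-verified Lean document; each statement's English description precedes it below -/
import Mathlib

section
/- Let P be a probability measure and let (X, Y^{(1)}, ..., Y^{(M)}) be a finite exchangeable family of random vectors on a probability space with underlying law P (i.e., the joint law is invariant under all permutations of the M+1 coordinates). Let T be any nonnegative measurable test statistic. Then, with the convention 0/0 = 0, the Besag-Clifford statistic Ê_M(X) = (M+1)·T(X) / (T(X) + Σ_{m=1}^M T(Y^{(m)})) satisfies E[Ê_M(X)] ≤ 1; consequently, for every α ∈ (0,1], P(Ê_M(X) ≥ 1/α) ≤ α. -/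
open MeasureTheory ProbabilityTheory Filter Finset

/-- **Proposition 1, Besag-Clifford e-value validity.**
If `(X, Y⁽¹⁾, …, Y⁽ᴹ⁾)` is exchangeable under `P` and `T` is a nonnegative
measurable test statistic, then the Besag-Clifford statistic
`Ê_M(X) = (M+1)·T(X) / (T(X) + Σ_m T(Y⁽ᵐ⁾))` (with `0/0 = 0`) has expectation
at most `1` under `P`, and consequently `P(Ê_M(X) ≥ 1/α) ≤ α` for `α ∈ (0,1]`. -/
theorem besag_clifford_evalue_valid
    {n M : ℕ} {Ω : Type*} [MeasurableSpace Ω]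
    (P : Measure Ω) [IsProbabilityMeasure P]
    (X : Ω → (Fin n → ℝ)) (Y : Fin M → Ω → (Fin n → ℝ))
    (hX : Measurable X) (hY : ∀ m, Measurable (Y m))
    (T : (Fin n → ℝ) → ℝ) (hT : Measurable T) (hT0 : ∀ x, 0 ≤ T x)
    -- exchangeability: the joint law of `(X, Y⁽¹⁾, …, Y⁽ᴹ⁾)` is invariant under
    -- every permutation of the `M + 1` coordinates
    (hexch : ∀ σ : Equiv.Perm (Fin (M + 1)),
      Measure.map
          (fun ω => (Fin.cons (X ω) (fun m => Y m ω) : Fin (M + 1) → Fin n → ℝ) ∘ σ) P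
        = Measure.map
            (fun ω => (Fin.cons (X ω) (fun m => Y m ω) : Fin (M + 1) → Fin n → ℝ)) P) :
    (∫ ω, ((M : ℝ) + 1) * T (X ω) / (T (X ω) + ∑ m : Fin M, T (Y m ω)) ∂P) ≤ 1 ∧
      ∀ α : ℝ, 0 < α → α ≤ 1 →
        P {ω | 1 / α ≤ ((M : ℝ) + 1) * T (X ω) / (T (X ω) + ∑ m : Fin M, T (Y m ω))}
          ≤ ENNReal.ofReal α := by
  classical
  set Z : Ω → (Fin (M + 1) → Fin n → ℝ) :=
    fun ω => Fin.cons (X ω) (fun m => Y m ω) with hZdef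
  have hZm : Measurable Z := by
    apply measurable_pi_iff.mpr
    intro j
    refine Fin.cases ?_ ?_ j
    · simpa [Z] using hX
    · intro m; simpa [Z] using hY m
  set S : (Fin (M + 1) → Fin n → ℝ) → ℝ := fun v => ∑ j, T (v j) with hSdef
  have hSm : Measurable S :=
    Finset.measurable_sum _ fun j _ => hT.comp (measurable_pi_apply j)
  set f : Fin (M + 1) → (Fin (M + 1) → Fin n → ℝ) → ℝ :=
    fun i v => ((M : ℝ) + 1) * T (v i) / S v with hfdef
  have hfm : ∀ i, Measurable (f i) := fun i =>
    (measurable_const.mul (hT.comp (measurable_pi_apply i))).div hSm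
  have hS0 : ∀ v, 0 ≤ S v := fun v => Finset.sum_nonneg fun j _ => hT0 _
  have hf0 : ∀ i v, 0 ≤ f i v := fun i v =>
    div_nonneg (mul_nonneg (by positivity) (hT0 _)) (hS0 v)
  have hfb : ∀ i v, f i v ≤ (M : ℝ) + 1 := by
    intro i v
    rcases eq_or_lt_of_le (hS0 v) with h | h
    · simp only [f, ← h, div_zero]
      positivity
    · rw [div_le_iff₀ h]
      have hTS : T (v i) ≤ S v := Finset.single_le_sum (fun j _ => hT0 _) (mem_univ i)
      nlinarith
  have hint : ∀ i, Integrable (fun ω => f i (Z ω)) P := by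
    intro i
    refine Integrable.mono' (integrable_const ((M : ℝ) + 1))
      ((hfm i).comp hZm).aestronglyMeasurable ?_
    filter_upwards with ω
    rw [Real.norm_eq_abs, abs_of_nonneg (hf0 i _)]
    exact hfb i _
  -- all marginal integrals coincide, by exchangeability
  have hkey : ∀ i, ∫ ω, f i (Z ω) ∂P = ∫ ω, f 0 (Z ω) ∂P := by
    intro i
    set σ : Equiv.Perm (Fin (M + 1)) := Equiv.swap 0 i with hσ
    have hcomp : ∀ v : Fin (M + 1) → Fin n → ℝ, f 0 (v ∘ σ) = f i v := by
      intro v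
      have hsum : S (v ∘ σ) = S v := by
        simp only [S, Function.comp]
        exact Equiv.sum_comp σ fun j => T (v j)
      simp [f, hsum, Function.comp, σ, Equiv.swap_apply_left]
    have hZσm : Measurable (fun ω => Z ω ∘ σ) := by
      apply measurable_pi_iff.mpr
      intro j
      exact (measurable_pi_apply (σ j)).comp hZm
    calc ∫ ω, f i (Z ω) ∂P = ∫ ω, f 0 (Z ω ∘ σ) ∂P := by simp_rw [hcomp]
      _ = ∫ v, f 0 v ∂(Measure.map (fun ω => Z ω ∘ σ) P) :=
          (integral_map hZσm.aemeasurable (hfm 0).aestronglyMeasurable).symm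
      _ = ∫ v, f 0 v ∂(Measure.map Z P) := by rw [hZdef]; rw [hexch σ]
      _ = ∫ ω, f 0 (Z ω) ∂P := integral_map hZm.aemeasurable (hfm 0).aestronglyMeasurable
  -- the sum of the M+1 statistics is at most M+1 pointwise
  have hsum_le : ∀ v, ∑ i, f i v ≤ (M : ℝ) + 1 := by
    intro v
    have h1 : ∑ i, f i v = ((M : ℝ) + 1) * S v / S v := by
      simp only [f, S, ← Finset.sum_div, ← Finset.mul_sum]
    rw [h1]
    rcases eq_or_lt_of_le (hS0 v) with h | h
    · rw [← h]; simp
      positivity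
    · rw [mul_div_assoc, div_self (ne_of_gt h), mul_one]
  have hMpos : (0 : ℝ) < (M : ℝ) + 1 := by positivity
  have hmain : (∫ ω, f 0 (Z ω) ∂P) ≤ 1 := by
    have hsum_int : ∑ i : Fin (M + 1), ∫ ω, f i (Z ω) ∂P = ∫ ω, ∑ i, f i (Z ω) ∂P :=
      (integral_finset_sum _ fun i _ => hint i).symm
    have h2 : (∫ ω, ∑ i, f i (Z ω) ∂P) ≤ (M : ℝ) + 1 := by
      calc (∫ ω, ∑ i, f i (Z ω) ∂P) ≤ ∫ _ω, ((M : ℝ) + 1) ∂P :=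
            integral_mono (integrable_finset_sum _ fun i _ => hint i)
              (integrable_const _) (fun ω => hsum_le (Z ω))
        _ = (M : ℝ) + 1 := by simp
    have h3 : ∑ i : Fin (M + 1), ∫ ω, f i (Z ω) ∂P
        = ((M : ℝ) + 1) * ∫ ω, f 0 (Z ω) ∂P := by
      simp_rw [hkey]
      rw [Finset.sum_const, Finset.card_univ, Fintype.card_fin, nsmul_eq_mul]
      push_cast
      ring
    have h4 : ((M : ℝ) + 1) * ∫ ω, f 0 (Z ω) ∂P ≤ (M : ℝ) + 1 := by
      rw [← h3, hsum_int]; exact h2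
    nlinarith [h4]
  -- rewrite the statistic as `f 0 ∘ Z`
  have heq : ∀ ω, ((M : ℝ) + 1) * T (X ω) / (T (X ω) + ∑ m : Fin M, T (Y m ω))
      = f 0 (Z ω) := by
    intro ω
    simp [f, S, Z, Fin.sum_univ_succ]
  have hE : (∫ ω, ((M : ℝ) + 1) * T (X ω) / (T (X ω) + ∑ m : Fin M, T (Y m ω)) ∂P) ≤ 1 := by
    simp_rw [heq]; exact hmain
  refine ⟨hE, ?_⟩
  intro α hα0 hα1
  have hintg : Integrable
      (fun ω => ((M : ℝ) + 1) * T (X ω) / (T (X ω) + ∑ m : Fin M, T (Y m ω))) P := by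
    have := hint 0
    simp_rw [heq]
    exact this
  have hnn : 0 ≤ᵐ[P] fun ω => ((M : ℝ) + 1) * T (X ω) / (T (X ω) + ∑ m : Fin M, T (Y m ω)) := by
    filter_upwards with ω
    rw [heq ω]; exact hf0 0 _
  have hmarkov := mul_meas_ge_le_integral_of_nonneg hnn hintg (1 / α)
  set A := {ω | 1 / α ≤ ((M : ℝ) + 1) * T (X ω) / (T (X ω) + ∑ m : Fin M, T (Y m ω))}
  have hAne : P A ≠ ⊤ := measure_ne_top P A
  have h4 : (1 / α) * (P A).toReal ≤ 1 := le_trans hmarkov hE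
  have h5 : (P A).toReal ≤ α := by
    rw [div_mul_eq_mul_div, one_mul, div_le_one hα0] at h4
    exact h4
  rw [← ENNReal.ofReal_toReal hAne]
  exact ENNReal.ofReal_le_ofReal h5
end

section
/- Let P and Q be probability measures on ℝ^n admitting densities p and q with respect to Lebesgue measure, with Q absolutely continuous with respect to P, and write E(x) = q(x)/p(x) for the likelihood ratio. Suppose T(x) = c·q(x)/p(x) for some constant c > 0 and T(x) < ∞ for all x. Let X ~ W where W ∈ {P, Q}, and let Y^{(1)}, Y^{(2)}, ... be i.i.d. samples from P, independent of X. Then the Besag-Clifford e-value Ê_M(X) = (M+1)·T(X) / (T(X) + Σ_{m=1}^M T(Y^{(m)})) converges almost surely to E(X) as M → ∞. -/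
/-!
Since `Q ≪ P`, the density `q` vanishes where `p` does, so the likelihood ratio `q / p` has
`P`-mean `∫ q = 1` and `T = c • (q / p)` has `P`-mean `c`. By the strong law of large
numbers `(1/M) Σ T(Y⁽ᵐ⁾) → c` almost surely, and then
`Ê_M(X) = ((M+1)/M) T(X) / (T(X)/M + (1/M) Σ T(Y⁽ᵐ⁾))` tends
to `T(X) / c = q(X) / p(X)` for every value of `X`.
-/

open MeasureTheory ProbabilityTheory Filter Finset

theorem ae_eq_zero_of_withDensity_absolutelyContinuous {α : Type*} [MeasurableSpace α]
    {ν : Measure α} {f g : α → ENNReal} (hf : Measurable f) (hg : Measurable g)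
    (h : ν.withDensity g ≪ ν.withDensity f) : ∀ᵐ x ∂ν, f x = 0 → g x = 0 := by
  have hP : ∀ᵐ x ∂ν.withDensity f, f x ≠ 0 := (ae_withDensity_iff hf).2 (by simp)
  filter_upwards [(ae_withDensity_iff hg).1 (h.ae_le hP)] with x hx
  exact not_imp_not.1 hx

theorem lintegral_ofReal_div_withDensity {α : Type*} [MeasurableSpace α] {ν : Measure α}
    {p q : α → ℝ} (hp : Measurable p) (hq : Measurable q) (hp0 : ∀ x, 0 ≤ p x)
    (hpq : ∀ᵐ x ∂ν, p x = 0 → q x = 0) :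
    ∫⁻ x, ENNReal.ofReal (q x / p x) ∂ν.withDensity (fun x => ENNReal.ofReal (p x)) =
      ∫⁻ x, ENNReal.ofReal (q x) ∂ν := by
  have hqp : Measurable fun x => q x / p x := hq.div hp
  rw [lintegral_withDensity_eq_lintegral_mul _ hp.ennreal_ofReal hqp.ennreal_ofReal]
  refine lintegral_congr_ae ?_
  filter_upwards [hpq] with x hx
  rcases (hp0 x).eq_or_lt with h0 | h0
  · simp [← h0, hx h0.symm]
  · simp [← ENNReal.ofReal_mul h0.le, mul_div_cancel₀ _ h0.ne']

section LikelihoodRatio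

variable {α : Type*} [MeasurableSpace α] {ν : Measure α} {p q : α → ℝ}
  {P Q : Measure α} [IsProbabilityMeasure Q]

theorem lintegral_ofReal_div_density_eq_one (hp : Measurable p) (hq : Measurable q)
    (hp0 : ∀ x, 0 ≤ p x) (hq0 : ∀ x, 0 ≤ q x)
    (hP : P = ν.withDensity fun x => ENNReal.ofReal (p x))
    (hQ : Q = ν.withDensity fun x => ENNReal.ofReal (q x)) (hQP : Q ≪ P) :
    ∫⁻ x, ENNReal.ofReal (q x / p x) ∂P = 1 := by
  have hpq : ∀ᵐ x ∂ν, p x = 0 → q x = 0 := by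
    filter_upwards [ae_eq_zero_of_withDensity_absolutelyContinuous hp.ennreal_ofReal
      hq.ennreal_ofReal (hQ ▸ hP ▸ hQP)] with x hx hx0
    exact (ENNReal.ofReal_eq_zero.1 (hx (by simp [hx0]))).antisymm (hq0 x)
  rw [hP, lintegral_ofReal_div_withDensity hp hq hp0 hpq, ← setLIntegral_univ,
    ← withDensity_apply _ .univ, ← hQ, measure_univ]

theorem integrable_div_density (hp : Measurable p) (hq : Measurable q) (hp0 : ∀ x, 0 ≤ p x)
    (hq0 : ∀ x, 0 ≤ q x) (hP : P = ν.withDensity fun x => ENNReal.ofReal (p x))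
    (hQ : Q = ν.withDensity fun x => ENNReal.ofReal (q x)) (hQP : Q ≪ P) :
    Integrable (fun x => q x / p x) P := by
  have hqp : Measurable fun x => q x / p x := hq.div hp
  refine (lintegral_ofReal_ne_top_iff_integrable hqp.aestronglyMeasurable
    (.of_forall fun x => div_nonneg (hq0 x) (hp0 x))).1 ?_
  rw [lintegral_ofReal_div_density_eq_one hp hq hp0 hq0 hP hQ hQP]
  exact ENNReal.one_ne_top

theorem integral_div_density_eq_one (hp : Measurable p) (hq : Measurable q) (hp0 : ∀ x, 0 ≤ p x)
    (hq0 : ∀ x, 0 ≤ q x) (hP : P = ν.withDensity fun x => ENNReal.ofReal (p x))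
    (hQ : Q = ν.withDensity fun x => ENNReal.ofReal (q x)) (hQP : Q ≪ P) :
    ∫ x, q x / p x ∂P = 1 := by
  rw [integral_eq_lintegral_of_nonneg_ae (.of_forall fun x => div_nonneg (hq0 x) (hp0 x))
    (hq.div hp).aestronglyMeasurable,
    lintegral_ofReal_div_density_eq_one hp hq hp0 hq0 hP hQ hQP, ENNReal.toReal_one]

end LikelihoodRatio

theorem ae_tendsto_sum_comp_div {Ω α : Type*} [MeasurableSpace Ω] [MeasurableSpace α]
    {μ : Measure Ω} {P : Measure α} {f : α → ℝ} {Y : ℕ → Ω → α}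
    (hf : Measurable f) (hfP : Integrable f P) (hY : ∀ m, Measurable (Y m))
    (hYlaw : ∀ m, μ.map (Y m) = P) (hindep : Pairwise fun i j => IndepFun (Y i) (Y j) μ) :
    ∀ᵐ ω ∂μ, Tendsto (fun M : ℕ => (∑ m ∈ range M, f (Y m ω)) / M) atTop
      (nhds (∫ x, f x ∂P)) := by
  have hlaw : ∀ m, μ.map (f ∘ Y m) = P.map f := fun m => by
    rw [← Measure.map_map hf (hY m), hYlaw m]
  have hident : ∀ m, IdentDistrib (f ∘ Y m) (f ∘ Y 0) μ μ := fun m =>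
    ⟨(hf.comp (hY m)).aemeasurable, (hf.comp (hY 0)).aemeasurable, by rw [hlaw, hlaw]⟩
  have hint : Integrable (f ∘ Y 0) μ :=
    (integrable_map_measure hf.aestronglyMeasurable (hY 0).aemeasurable).1 (hYlaw 0 ▸ hfP)
  have hmean : μ[f ∘ Y 0] = ∫ x, f x ∂P := by
    rw [← hYlaw 0, integral_map (hY 0).aemeasurable hf.aestronglyMeasurable]; rfl
  have hslln := strong_law_ae_real (fun m => f ∘ Y m) hint
    (fun i j hij => (hindep hij).comp hf hf) hident
  rwa [hmean] at hslln

theorem tendsto_besagClifford_of_tendsto_mean {t c : ℝ} {S : ℕ → ℝ} (hc : c ≠ 0)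
    (hS : Tendsto (fun M : ℕ => S M / M) atTop (nhds c)) :
    Tendsto (fun M : ℕ => ((M : ℝ) + 1) * t / (t + S M)) atTop (nhds (t / c)) := by
  have hnum : Tendsto (fun M : ℕ => ((M : ℝ) + 1) / M * t) atTop (nhds t) := by
    simpa using (tendsto_natCast_div_add_atTop (1 : ℝ)).inv₀ one_ne_zero |>.mul_const t
  have hden : Tendsto (fun M : ℕ => (t + S M) / M) atTop (nhds c) := by
    simpa [add_div] using (tendsto_const_div_atTop_nhds_zero_nat t).add hS
  refine (hnum.div hden hc).congr' ?_
  filter_upwards [eventually_ne_atTop 0] with M hM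
  rw [Pi.div_apply, div_mul_eq_mul_div, div_div_div_cancel_right₀ (Nat.cast_ne_zero.2 hM)]

theorem besag_clifford_iid_log_optimal_general
    {n : ℕ} {Ω : Type*} [MeasurableSpace Ω]
    (μ : Measure Ω)
    (P Q : Measure (Fin n → ℝ))
    [IsProbabilityMeasure Q]
    (p q : (Fin n → ℝ) → ℝ) (hp : Measurable p) (hq : Measurable q)
    (hp0 : ∀ x, 0 ≤ p x) (hq0 : ∀ x, 0 ≤ q x)
    (hP : P = volume.withDensity (fun x => ENNReal.ofReal (p x)))
    (hQ : Q = volume.withDensity (fun x => ENNReal.ofReal (q x)))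
    (hQP : Q ≪ P)
    (T : (Fin n → ℝ) → ℝ) (c : ℝ) (hc : 0 < c)
    (hTdef : ∀ x, T x = c * (q x / p x))
    (X : Ω → (Fin n → ℝ)) (Y : ℕ → Ω → (Fin n → ℝ))
    (hY : ∀ m, Measurable (Y m))
    (hYlaw : ∀ m, Measure.map (Y m) μ = P)
    -- `X, Y⁽¹⁾, Y⁽²⁾, …` are jointly independent (so the `Y`'s are i.i.d. from `P`,
    -- independent of `X`)
    (hindep : iIndepFun
      (fun o : Option ℕ => Option.elim o X Y) μ) :
    ∀ᵐ ω ∂μ, Tendsto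
      (fun M : ℕ =>
        ((M : ℝ) + 1) * T (X ω) / (T (X ω) + ∑ m ∈ Finset.range M, T (Y m ω)))
      atTop (nhds (q (X ω) / p (X ω))) := by
  have hT : T = fun x => c * (q x / p x) := funext hTdef
  have hTint : Integrable T P :=
    hT ▸ (integrable_div_density hp hq hp0 hq0 hP hQ hQP).const_mul c
  have hTmean : ∫ x, T x ∂P = c := by
    rw [hT, integral_const_mul, integral_div_density_eq_one hp hq hp0 hq0 hP hQ hQP, mul_one]
  have hYindep : Pairwise fun i j => IndepFun (Y i) (Y j) μ := fun i j hij =>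
    hindep.indepFun (i := some i) (j := some j) (Option.some_injective _ |>.ne hij)
  filter_upwards [ae_tendsto_sum_comp_div (hT ▸ measurable_const.mul (hq.div hp)) hTint hY
    hYlaw hYindep] with ω hω
  rw [hTmean] at hω
  convert tendsto_besagClifford_of_tendsto_mean hc.ne' hω using 2
  rw [hTdef, mul_div_cancel_left₀ _ hc.ne']

/-- **Theorem 1, exact sampling.**
Let `P, Q` be probability measures on `ℝⁿ` with Lebesgue densities `p, q`, `Q ≪ P`,
and `E(x) = q(x)/p(x)`. Suppose `T(x) = c·q(x)/p(x)` for some `c > 0`. If `X ~ W`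
with `W ∈ {P, Q}` and `Y⁽¹⁾, Y⁽²⁾, …` are i.i.d. from `P`, independent of `X`, then
`Ê_M(X) = (M+1)·T(X)/(T(X) + Σ_{m=1}^M T(Y⁽ᵐ⁾))` converges almost surely to `E(X)`. -/
theorem besag_clifford_iid_log_optimal
    {n : ℕ} {Ω : Type*} [MeasurableSpace Ω]
    (μ : Measure Ω) [IsProbabilityMeasure μ]
    (P Q W : Measure (Fin n → ℝ))
    [IsProbabilityMeasure P] [IsProbabilityMeasure Q]
    (p q : (Fin n → ℝ) → ℝ) (hp : Measurable p) (hq : Measurable q)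
    (hp0 : ∀ x, 0 ≤ p x) (hq0 : ∀ x, 0 ≤ q x)
    (hP : P = volume.withDensity (fun x => ENNReal.ofReal (p x)))
    (hQ : Q = volume.withDensity (fun x => ENNReal.ofReal (q x)))
    (hQP : Q ≪ P)
    (T : (Fin n → ℝ) → ℝ) (c : ℝ) (hc : 0 < c)
    (hTdef : ∀ x, T x = c * (q x / p x))
    (X : Ω → (Fin n → ℝ)) (Y : ℕ → Ω → (Fin n → ℝ))
    (hX : Measurable X) (hY : ∀ m, Measurable (Y m))
    (hW : W = P ∨ W = Q)
    (hXlaw : Measure.map X μ = W)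
    (hYlaw : ∀ m, Measure.map (Y m) μ = P)
    -- `X, Y⁽¹⁾, Y⁽²⁾, …` are jointly independent (so the `Y`'s are i.i.d. from `P`,
    -- independent of `X`)
    (hindep : iIndepFun
      (fun o : Option ℕ => Option.elim o X Y) μ) :
    ∀ᵐ ω ∂μ, Tendsto
      (fun M : ℕ =>
        ((M : ℝ) + 1) * T (X ω) / (T (X ω) + ∑ m ∈ Finset.range M, T (Y m ω)))
      atTop (nhds (q (X ω) / p (X ω))) :=
  besag_clifford_iid_log_optimal_general μ P Q p q hp hq hp0 hq0 hP hQ hQP T c hc hTdef X Y hY hYlaw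
    hindep
end

section
/- Let P, Q, U be probability measures on ℝ^n with P and Q admitting densities p and q, Q ≪ P, and let E(x) = q(x)/p(x). Suppose T(x) = c·E(x) for some constant c > 0 with T(x) < ∞ for all x. Let X ~ W with W ∈ {P, Q}, and let Y^{(1)}, Y^{(2)}, ... be i.i.d. samples from U, independent of X. If 0 < E^U[E(Y)] = ∫ (q(y)/p(y)) dU(y) < ∞, then the Besag-Clifford e-value Ê_M(X) = (M+1)·T(X) / (T(X) + Σ_{m=1}^M T(Y^{(m)})) converges almost surely to E(X) / E^U[E(Y)] as M → ∞. -/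
open MeasureTheory ProbabilityTheory Filter Finset

/-!
The constant `c` cancels from `Ê_M`, so `Ê_M(X) = (M+1)·E(X) / (E(X) + Σ_{m=1}^M E(Y⁽ᵐ⁾))`.
Dividing numerator and denominator by `M`, the numerator tends to `E(X)` and, by the strong law
of large numbers applied to the i.i.d. integrable variables `E(Y⁽ᵐ⁾)`, the denominator tends
almost surely to `E^U[E(Y)] ≠ 0`.
-/

/-- The Besag–Clifford e-value `Ê_M` for `T(X) = t` and `T(Y⁽ᵐ⁺¹⁾) = ts m`. -/
noncomputable def besagClifford (M : ℕ) (t : ℝ) (ts : ℕ → ℝ) : ℝ :=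
  ((M : ℝ) + 1) * t / (t + ∑ m ∈ range M, ts m)

lemma besagClifford_const_mul {c : ℝ} (hc : c ≠ 0) (M : ℕ) (t : ℝ) (ts : ℕ → ℝ) :
    besagClifford M (c * t) (fun m => c * ts m) = besagClifford M t ts := by
  rw [besagClifford, besagClifford, ← mul_sum, ← mul_add, mul_left_comm,
    mul_div_mul_left _ _ hc]

lemma tendsto_besagClifford_of_tendsto_avg {ts : ℕ → ℝ} {I : ℝ} (hI : I ≠ 0) (t : ℝ)
    (hts : Tendsto (fun M : ℕ => (∑ m ∈ range M, ts m) / M) atTop (nhds I)) :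
    Tendsto (fun M => besagClifford M t ts) atTop (nhds (t / I)) := by
  have hnum : Tendsto (fun M : ℕ => ((M : ℝ) + 1) / M * t) atTop (nhds t) := by
    have h := (tendsto_const_nhds (x := (1 : ℝ))).add tendsto_one_div_atTop_nhds_zero_nat
    rw [add_zero] at h
    refine (one_mul t ▸ h.mul_const t).congr' ?_
    filter_upwards [eventually_ne_atTop 0] with M hM
    field_simp
  have hden : Tendsto (fun M : ℕ => t / M + (∑ m ∈ range M, ts m) / M) atTop (nhds I) := by
    simpa using (tendsto_const_div_atTop_nhds_zero_nat t).add hts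
  refine (hnum.div hden hI).congr' ?_
  filter_upwards [eventually_ne_atTop 0] with M hM
  simp only [Pi.div_apply, besagClifford]
  rw [← add_div, div_mul_eq_mul_div, div_div_div_cancel_right₀ (by exact_mod_cast hM)]

theorem strong_law_ae_real_comp {Ω E : Type*} [MeasurableSpace Ω] [MeasurableSpace E]
    {μ : Measure Ω} {U : Measure E} {Y : ℕ → Ω → E} (hY : ∀ m, Measurable (Y m))
    (hindep : Pairwise (Function.onFun (IndepFun · · μ) Y)) (hlaw : ∀ m, μ.map (Y m) = U)
    {f : E → ℝ} (hf : Measurable f) (hfU : Integrable f U) :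
    ∀ᵐ ω ∂μ, Tendsto (fun M : ℕ => (∑ m ∈ range M, f (Y m ω)) / M) atTop
      (nhds (∫ y, f y ∂U)) := by
  have hint : Integrable (f ∘ Y 0) μ := by
    rw [← integrable_map_measure hf.aestronglyMeasurable (hY 0).aemeasurable, hlaw 0]
    exact hfU
  have hident : ∀ m, IdentDistrib (f ∘ Y m) (f ∘ Y 0) μ μ := fun m =>
    IdentDistrib.comp ⟨(hY m).aemeasurable, (hY 0).aemeasurable, by rw [hlaw, hlaw]⟩ hf
  have hmean : μ[f ∘ Y 0] = ∫ y, f y ∂U := by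
    rw [← hlaw 0, integral_map (hY 0).aemeasurable hf.aestronglyMeasurable, Function.comp_def]
  have hslln :=
    strong_law_ae_real (fun m => f ∘ Y m) hint (fun i j hij => (hindep hij).comp hf hf) hident
  rw [hmean] at hslln
  simpa only [Function.comp_apply] using hslln

theorem besag_clifford_biased_sampling_general
    {n : ℕ} {Ω : Type*} [MeasurableSpace Ω]
    (μ : Measure Ω)
    (U : Measure (Fin n → ℝ))
    (p q : (Fin n → ℝ) → ℝ) (hp : Measurable p) (hq : Measurable q)
    (T : (Fin n → ℝ) → ℝ) (c : ℝ) (hc : 0 < c)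
    (hTdef : ∀ x, T x = c * (q x / p x))
    (X : Ω → (Fin n → ℝ)) (Y : ℕ → Ω → (Fin n → ℝ))
    (hY : ∀ m, Measurable (Y m))
    (hYlaw : ∀ m, Measure.map (Y m) μ = U)
    -- `X, Y⁽¹⁾, Y⁽²⁾, …` are jointly independent (so the `Y`'s are i.i.d. from `U`,
    -- independent of `X`)
    (hindep : iIndepFun
      (fun o : Option ℕ => Option.elim o X Y) μ)
    -- `0 < E^U[E(Y)] < ∞`
    (hpos : 0 < ∫ y, q y / p y ∂U)
    (hint : Integrable (fun y => q y / p y) U) :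
    ∀ᵐ ω ∂μ, Tendsto
      (fun M : ℕ =>
        ((M : ℝ) + 1) * T (X ω) / (T (X ω) + ∑ m ∈ Finset.range M, T (Y m ω)))
      atTop (nhds ((q (X ω) / p (X ω)) / ∫ y, q y / p y ∂U)) := by
  obtain rfl : T = fun x => c * (q x / p x) := funext hTdef
  have hYindep : Pairwise (Function.onFun (IndepFun · · μ) Y) := fun i j hij =>
    hindep.indepFun (Option.some_injective _ |>.ne hij)
  filter_upwards [strong_law_ae_real_comp hY hYindep hYlaw (hq.div hp) hint] with ω hω
  refine (tendsto_besagClifford_of_tendsto_avg hpos.ne' _ hω).congr fun M => ?_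
  exact (besagClifford_const_mul hc.ne' M _ _).symm

/-- **biased sampling limit, equation (5) of the paper.**
Let `P, Q, U` be probability measures on `ℝⁿ`, with `P, Q` admitting Lebesgue
densities `p, q`, `Q ≪ P`, and `E(x) = q(x)/p(x)`. Suppose `T(x) = c·E(x)` with
`c > 0`. If `X ~ W` with `W ∈ {P, Q}` and `Y⁽¹⁾, Y⁽²⁾, …` are i.i.d. from `U`,
independent of `X`, and `0 < E^U[E(Y)] = ∫ (q/p) dU < ∞`, then
`Ê_M(X) = (M+1)·T(X)/(T(X) + Σ_{m=1}^M T(Y⁽ᵐ⁾))` converges almost surely to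
`E(X) / E^U[E(Y)]`. -/
theorem besag_clifford_biased_sampling
    {n : ℕ} {Ω : Type*} [MeasurableSpace Ω]
    (μ : Measure Ω) [IsProbabilityMeasure μ]
    (P Q U W : Measure (Fin n → ℝ))
    [IsProbabilityMeasure P] [IsProbabilityMeasure Q] [IsProbabilityMeasure U]
    (p q : (Fin n → ℝ) → ℝ) (hp : Measurable p) (hq : Measurable q)
    (hp0 : ∀ x, 0 ≤ p x) (hq0 : ∀ x, 0 ≤ q x)
    (hP : P = volume.withDensity (fun x => ENNReal.ofReal (p x)))
    (hQ : Q = volume.withDensity (fun x => ENNReal.ofReal (q x)))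
    (hQP : Q ≪ P)
    (T : (Fin n → ℝ) → ℝ) (c : ℝ) (hc : 0 < c)
    (hTdef : ∀ x, T x = c * (q x / p x))
    (X : Ω → (Fin n → ℝ)) (Y : ℕ → Ω → (Fin n → ℝ))
    (hX : Measurable X) (hY : ∀ m, Measurable (Y m))
    (hW : W = P ∨ W = Q)
    (hXlaw : Measure.map X μ = W)
    (hYlaw : ∀ m, Measure.map (Y m) μ = U)
    -- `X, Y⁽¹⁾, Y⁽²⁾, …` are jointly independent (so the `Y`'s are i.i.d. from `U`,
    -- independent of `X`)
    (hindep : iIndepFun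
      (fun o : Option ℕ => Option.elim o X Y) μ)
    -- `0 < E^U[E(Y)] < ∞`
    (hpos : 0 < ∫ y, q y / p y ∂U)
    (hint : Integrable (fun y => q y / p y) U) :
    ∀ᵐ ω ∂μ, Tendsto
      (fun M : ℕ =>
        ((M : ℝ) + 1) * T (X ω) / (T (X ω) + ∑ m ∈ Finset.range M, T (Y m ω)))
      atTop (nhds ((q (X ω) / p (X ω)) / ∫ y, q y / p y ∂U)) :=
  besag_clifford_biased_sampling_general μ U p q hp hq T c hc hTdef X Y hY hYlaw hindep hpos hint
end

section
/- Let 𝒫 = {P₁, ..., P_R} be a finite family of probability measures. For each r, let T_r be a nonnegative measurable test statistic and let (X, Y_r^{(1)}, ..., Y_r^{(M)}) be random vectors whose joint law is exchangeable whenever X ~ P_r. Define Ê_{M,r}(X) = (M+1)·T_r(X) / (T_r(X) + Σ_{m=1}^M T_r(Y_r^{(m)})) (with convention 0/0 = 0) and Ê_M(X) = min_{r=1,...,R} Ê_{M,r}(X). Then for every r = 1, ..., R, E^{P_r}[Ê_M(X)] ≤ 1; that is, the composite Besag-Clifford e-value is a valid e-variable for the composite null 𝒫. -/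
open MeasureTheory ProbabilityTheory Filter Finset

/-- **Proposition 5, composite Besag-Clifford e-value.**
Let `𝒫 = {P₁, …, P_R}` be a finite family of probability measures. For each `r`,
let `T_r` be a nonnegative test statistic and let `(X, Y_r⁽¹⁾, …, Y_r⁽ᴹ⁾)` be
exchangeable whenever `X ~ P_r` (i.e., under the joint law `μ_r` in which the null
`P_r` holds). Then the composite Besag-Clifford e-value
`Ê_M(X) = min_r (M+1)·T_r(X)/(T_r(X) + Σ_m T_r(Y_r⁽ᵐ⁾))` satisfies
`E^{P_r}[Ê_M(X)] ≤ 1` for every `r`. -/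
theorem besag_clifford_composite_null
    {n M R : ℕ} {Ω : Type*} [MeasurableSpace Ω] (hR : 0 < R)
    -- `μ r` is the joint law of all random vectors when the null `P r` is true
    (μ : Fin R → Measure Ω) (hprob : ∀ r, IsProbabilityMeasure (μ r))
    (P : Fin R → Measure (Fin n → ℝ)) (hPprob : ∀ r, IsProbabilityMeasure (P r))
    (X : Ω → (Fin n → ℝ)) (Y : Fin R → Fin M → Ω → (Fin n → ℝ))
    (hX : Measurable X) (hY : ∀ r m, Measurable (Y r m))
    (T : Fin R → (Fin n → ℝ) → ℝ)
    (hT : ∀ r, Measurable (T r)) (hT0 : ∀ r x, 0 ≤ T r x)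
    -- under `μ r` we have `X ~ P r` ...
    (hXlaw : ∀ r, Measure.map X (μ r) = P r)
    -- ... and `(X, Y_r⁽¹⁾, …, Y_r⁽ᴹ⁾)` is exchangeable
    (hexch : ∀ r, ∀ σ : Equiv.Perm (Fin (M + 1)),
      Measure.map
          (fun ω => (Fin.cons (X ω) (fun m => Y r m ω) : Fin (M + 1) → Fin n → ℝ) ∘ σ)
          (μ r)
        = Measure.map
            (fun ω => (Fin.cons (X ω) (fun m => Y r m ω) : Fin (M + 1) → Fin n → ℝ))
            (μ r)) :
    ∀ r : Fin R,
      (∫ ω, (⨅ r' : Fin R,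
          ((M : ℝ) + 1) * T r' (X ω) / (T r' (X ω) + ∑ m : Fin M, T r' (Y r' m ω)))
        ∂(μ r)) ≤ 1 := by
  intro r
  haveI := hprob r
  set Z : Ω → (Fin (M+1) → Fin n → ℝ) := fun ω => Fin.cons (X ω) (fun m => Y r m ω) with hZ
  have hZmeas : Measurable Z := by
    apply measurable_pi_lambda
    intro i
    refine Fin.cases ?_ ?_ i
    · exact hX
    · intro m; exact hY r m
  set F : Fin (M+1) → (Fin (M+1) → Fin n → ℝ) → ℝ :=
    fun i z => ((M:ℝ)+1) * T r (z i) / ∑ j, T r (z j) with hF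
  have hFmeas : ∀ i, Measurable (F i) := fun i =>
    (measurable_const.mul ((hT r).comp (measurable_pi_apply i))).div
      (Finset.measurable_sum _ (fun j _ => (hT r).comp (measurable_pi_apply j)))
  have hM1pos : (0:ℝ) < (M:ℝ)+1 := by positivity
  have hF0 : ∀ i z, 0 ≤ F i z := fun i z =>
    div_nonneg (mul_nonneg hM1pos.le (hT0 r _)) (Finset.sum_nonneg fun j _ => hT0 r _)
  have hSnn : ∀ z : Fin (M+1) → Fin n → ℝ, 0 ≤ ∑ j, T r (z j) :=
    fun z => Finset.sum_nonneg fun j _ => hT0 r _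
  have hFle : ∀ i z, F i z ≤ (M:ℝ)+1 := by
    intro i z
    rcases eq_or_lt_of_le (hSnn z) with h | h
    · simp [hF, ← h]
      positivity
    · rw [hF, div_le_iff₀ h]
      have hle : T r (z i) ≤ ∑ j, T r (z j) :=
        Finset.single_le_sum (fun j _ => hT0 r (z j)) (Finset.mem_univ i)
      nlinarith
  have hFsum : ∀ z, ∑ i, F i z ≤ (M:ℝ)+1 := by
    intro z
    rcases eq_or_lt_of_le (hSnn z) with h | h
    · have : ∀ i, F i z = 0 := by intro i; simp [hF, ← h]
      simp [this]
      positivity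
    · have : ∑ i, F i z = ((M:ℝ)+1) * (∑ j, T r (z j)) / ∑ j, T r (z j) := by
        simp [hF, Finset.sum_div, Finset.mul_sum]
      rw [this, mul_div_assoc, div_self h.ne', mul_one]
  have hint : ∀ i, Integrable (fun ω => F i (Z ω)) (μ r) := by
    intro i
    refine Integrable.mono' (integrable_const ((M:ℝ)+1))
      ((hFmeas i).comp hZmeas).aestronglyMeasurable ?_
    filter_upwards with ω
    rw [Real.norm_eq_abs, abs_of_nonneg (hF0 i _)]
    exact hFle i _
  -- all F i have the same expectation
  have h_eq : ∀ i, ∫ ω, F i (Z ω) ∂(μ r) = ∫ ω, F 0 (Z ω) ∂(μ r) := by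
    intro i
    have hcomp : ∀ ω, F i (Z ω) = F 0 (Z ω ∘ (Equiv.swap 0 i)) := by
      intro ω
      simp only [hF, Function.comp_apply, Equiv.swap_apply_left]
      congr 1
      exact (Equiv.sum_comp (Equiv.swap 0 i) (fun j => T r (Z ω j))).symm
    calc ∫ ω, F i (Z ω) ∂(μ r)
        = ∫ ω, F 0 (Z ω ∘ (Equiv.swap 0 i)) ∂(μ r) := by simp_rw [hcomp]
      _ = ∫ z, F 0 z ∂(Measure.map (fun ω => Z ω ∘ (Equiv.swap 0 i)) (μ r)) := by
          have hφ : Measurable (fun ω => Z ω ∘ ⇑(Equiv.swap 0 i)) :=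
            measurable_pi_lambda _
              (fun j => (measurable_pi_apply ((Equiv.swap 0 i) j)).comp hZmeas)
          exact (integral_map hφ.aemeasurable (hFmeas 0).aestronglyMeasurable).symm
      _ = ∫ z, F 0 z ∂(Measure.map Z (μ r)) := by rw [hexch r (Equiv.swap 0 i)]
      _ = ∫ ω, F 0 (Z ω) ∂(μ r) := by
          rw [integral_map hZmeas.aemeasurable (hFmeas 0).aestronglyMeasurable]
  have key : ∫ ω, F 0 (Z ω) ∂(μ r) ≤ 1 := by
    have h1 : ((M:ℝ)+1) * ∫ ω, F 0 (Z ω) ∂(μ r) = ∫ ω, ∑ i, F i (Z ω) ∂(μ r) := by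
      rw [integral_finset_sum _ (fun i _ => hint i)]
      simp [h_eq, Finset.sum_const]
    have h2 : ∫ ω, ∑ i, F i (Z ω) ∂(μ r) ≤ (M:ℝ)+1 := by
      calc ∫ ω, ∑ i, F i (Z ω) ∂(μ r) ≤ ∫ _ω, ((M:ℝ)+1) ∂(μ r) :=
            integral_mono (integrable_finset_sum _ (fun i _ => hint i))
              (integrable_const _) (fun ω => hFsum (Z ω))
        _ = (M:ℝ)+1 := by simp
    nlinarith [h1, h2]
  have hterm : ∀ ω, (⨅ r' : Fin R,
      ((M : ℝ) + 1) * T r' (X ω) / (T r' (X ω) + ∑ m : Fin M, T r' (Y r' m ω)))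
      ≤ F 0 (Z ω) := by
    intro ω
    have hFeq : F 0 (Z ω) =
        ((M : ℝ) + 1) * T r (X ω) / (T r (X ω) + ∑ m : Fin M, T r (Y r m ω)) := by
      simp [hF, hZ, Fin.sum_univ_succ]
    rw [hFeq]
    have hbdd : BddBelow (Set.range fun r' : Fin R =>
        ((M : ℝ) + 1) * T r' (X ω) / (T r' (X ω) + ∑ m : Fin M, T r' (Y r' m ω))) := by
      refine ⟨0, ?_⟩
      rintro x ⟨r', rfl⟩
      exact div_nonneg (mul_nonneg hM1pos.le (hT0 r' _))
        (add_nonneg (hT0 r' _) (Finset.sum_nonneg fun m _ => hT0 r' _))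
    exact ciInf_le hbdd r
  have hinfnn : ∀ ω, 0 ≤ (⨅ r' : Fin R,
      ((M : ℝ) + 1) * T r' (X ω) / (T r' (X ω) + ∑ m : Fin M, T r' (Y r' m ω))) := by
    intro ω
    haveI : Nonempty (Fin R) := ⟨r⟩
    exact le_ciInf fun r' => div_nonneg (mul_nonneg hM1pos.le (hT0 r' _))
      (add_nonneg (hT0 r' _) (Finset.sum_nonneg fun m _ => hT0 r' _))
  have hinfmeas : Measurable (fun ω => ⨅ r' : Fin R,
      ((M : ℝ) + 1) * T r' (X ω) / (T r' (X ω) + ∑ m : Fin M, T r' (Y r' m ω))) := by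
    apply Measurable.iInf
    intro r'
    exact (measurable_const.mul ((hT r').comp hX)).div
      (((hT r').comp hX).add (Finset.measurable_sum _ (fun m _ => (hT r').comp (hY r' m))))
  have hinfint : Integrable (fun ω => ⨅ r' : Fin R,
      ((M : ℝ) + 1) * T r' (X ω) / (T r' (X ω) + ∑ m : Fin M, T r' (Y r' m ω))) (μ r) := by
    refine Integrable.mono' (hint 0) hinfmeas.aestronglyMeasurable ?_
    filter_upwards with ω
    rw [Real.norm_eq_abs, abs_of_nonneg (hinfnn ω)]
    exact hterm ω
  calc (∫ ω, (⨅ r' : Fin R,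
          ((M : ℝ) + 1) * T r' (X ω) / (T r' (X ω) + ∑ m : Fin M, T r' (Y r' m ω)))
        ∂(μ r)) ≤ ∫ ω, F 0 (Z ω) ∂(μ r) :=
        integral_mono hinfint (hint 0) hterm
    _ ≤ 1 := key
end

section
/- Let P, Q be probability measures on ℝ^n with densities p, q, Q ≪ P, and E(x) = q(x)/p(x). For each time i = 1, ..., t, let (X_i, Y_i^{(0)}, Y_i^{(1)}, ..., Y_i^{(M)}) be generated independently across i as follows: X_i ~ W ∈ {P, Q}, Y_i^{(0)} | X_i ~ V^J(X_i, ·), and conditionally on Y_i^{(0)}, Y_i^{(1)}, ..., Y_i^{(M)} are i.i.d. from U^J(Y_i^{(0)}, ·). Define Û_i = (M+1)·T(X_i) / (T(X_i) + Σ_{m=1}^M T(Y_i^{(m)})) with T(x) = c·q(x)/p(x), c > 0, and Ê_t = Π_{i=1}^t Û_i. Suppose Δ^J(y') = ∫ (q(y)/p(y)) U^J(y', dy) satisfies 0 < Δ^J(y') < ∞ and is continuous in y'. Then for every fixed t, as M → ∞, Ê_t converges almost surely to (Π_{i=1}^t E(X_i)) / (Π_{i=1}^t Δ^J(Y_i^{(0)})).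 -/
/-!
Conditionally on `Y⁽⁰⁾` the samples `Y⁽¹⁾, Y⁽²⁾, …` are i.i.d. from `U^J(Y⁽⁰⁾, ·)`, so the joint
law of `(Y⁽⁰⁾, (Y⁽ᵐ⁾)ₘ)` is the law of `Y⁽⁰⁾` composed with the kernel `y' ↦ U^J(y', ·)^⊗ℕ`.
The strong law of large numbers in each fibre of this kernel gives, almost surely,
`(1/M) Σ_{m<M} E(Y⁽ᵐ⁾) → Δ^J(Y⁽⁰⁾)`. Dividing numerator and denominator of `Û` by `M + 1`
(the constant `c` cancels) yields `Û → E(X)/Δ^J(Y⁽⁰⁾)` since `Δ^J > 0`, and a finite product of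
almost surely convergent factors converges almost surely.
-/

open MeasureTheory ProbabilityTheory Filter Finset

open scoped Topology

namespace ProbabilityTheory.Kernel

variable {α ι : Type*} {X : ι → Type*} [MeasurableSpace α] [∀ i, MeasurableSpace (X i)]

noncomputable def infinitePi (κ : (i : ι) → Kernel α (X i)) [∀ i, IsMarkovKernel (κ i)] :
    Kernel α (Π i, X i) where
  toFun a := Measure.infinitePi fun i => κ i a
  measurable' := by
    refine .measure_of_isPiSystem_of_isProbabilityMeasure generateFrom_squareCylinders.symm
      (isPiSystem_squareCylinders (fun _ => MeasurableSpace.isPiSystem_measurableSet)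
        fun _ => .univ) ?_
    rintro _ ⟨s, t, ht, rfl⟩
    simp only [Set.mem_univ_pi] at ht
    simp_rw [Measure.infinitePi_pi _ fun i _ => ht i]
    exact Finset.measurable_prod _ fun i _ => Kernel.measurable_coe _ (ht i)

variable (κ : (i : ι) → Kernel α (X i)) [∀ i, IsMarkovKernel (κ i)]

lemma infinitePi_apply (a : α) : infinitePi κ a = Measure.infinitePi fun i => κ i a := rfl

instance : IsMarkovKernel (infinitePi κ) :=
  ⟨fun a => by rw [infinitePi_apply]; infer_instance⟩

end ProbabilityTheory.Kernel

namespace MeasureTheory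

lemma isCountablySpanning_squareCylinders {ι : Type*} {X : ι → Type*} {C : ∀ i, Set (Set (X i))}
    (hC : ∀ i, Set.univ ∈ C i) : IsCountablySpanning (squareCylinders C) :=
  ⟨fun _ => Set.univ, fun _ => ⟨∅, fun _ => Set.univ, fun i _ => hC i, by simp⟩, Set.iUnion_const _⟩

end MeasureTheory

namespace ProbabilityTheory

/-- Conditionally on `Y₀`, the `Y i` are independent with common law `κ (Y₀ ·)`. -/
def CondIID {Ω α ι β : Type*} [MeasurableSpace Ω] [MeasurableSpace α] [MeasurableSpace β]
    (μ : Measure Ω) (κ : Kernel α β) (Y₀ : Ω → α) (Y : ι → Ω → β) : Prop :=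
  ∀ (B₀ : Set α) (s : Finset ι) (B : ι → Set β), MeasurableSet B₀ → (∀ i, MeasurableSet (B i)) →
    μ (Y₀ ⁻¹' B₀ ∩ ⋂ i ∈ s, Y i ⁻¹' B i) = ∫⁻ ω in Y₀ ⁻¹' B₀, ∏ i ∈ s, κ (Y₀ ω) (B i) ∂μ

lemma condIID_of_forall_fin {Ω α β : Type*} [MeasurableSpace Ω] [MeasurableSpace α]
    [MeasurableSpace β] {μ : Measure Ω} {κ : Kernel α β} [IsMarkovKernel κ] {Y₀ : Ω → α}
    {Y : ℕ → Ω → β} (h : ∀ (B₀ : Set α) (M : ℕ) (B : Fin M → Set β), MeasurableSet B₀ →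
      (∀ m, MeasurableSet (B m)) →
      μ (Y₀ ⁻¹' B₀ ∩ ⋂ m : Fin M, Y m ⁻¹' B m)
        = ∫⁻ ω in Y₀ ⁻¹' B₀, ∏ m : Fin M, κ (Y₀ ω) (B m) ∂μ) :
    CondIID μ κ Y₀ Y := by
  intro B₀ s B hB₀ hB
  set M := s.sup id + 1
  have hs : s ⊆ range M := fun m hm => mem_range.mpr (Nat.lt_succ_of_le (s.le_sup (f := id) hm))
  set B' : Fin M → Set β := fun m => if (m : ℕ) ∈ s then B m else Set.univ
  have hsets : ⋂ m : Fin M, Y m ⁻¹' B' m = ⋂ i ∈ s, Y i ⁻¹' B i := by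
    ext ω
    simp only [Set.mem_iInter, Set.mem_preimage]
    refine ⟨fun hω i hi => by simpa [B', hi] using hω ⟨i, mem_range.mp (hs hi)⟩, fun hω m => ?_⟩
    by_cases hm : (m : ℕ) ∈ s
    · simpa [B', hm] using hω m hm
    · simp [B', hm]
  have hprods : ∀ y, ∏ m : Fin M, κ y (B' m) = ∏ i ∈ s, κ y (B i) := fun y => by
    simp_rw [B', apply_ite (κ y), measure_univ]
    rw [Fin.prod_univ_eq_prod_range (fun m => if m ∈ s then κ y (B m) else 1), prod_ite_mem,
      inter_eq_right.mpr hs]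
  simpa only [hsets, hprods] using
    h B₀ M B' hB₀ fun m => by simp only [B']; split_ifs <;> simp [hB]

theorem map_prodMk_eq_compProd_infinitePi {Ω α ι β : Type*} [MeasurableSpace Ω]
    [MeasurableSpace α] [MeasurableSpace β] {μ : Measure Ω} [IsFiniteMeasure μ]
    {κ : Kernel α β} [IsMarkovKernel κ] {Y₀ : Ω → α} {Y : ι → Ω → β}
    (hY₀ : Measurable Y₀) (hY : ∀ i, Measurable (Y i))
    (h : CondIID μ κ Y₀ Y) :
    μ.map (fun ω => (Y₀ ω, fun i => Y i ω)) = μ.map Y₀ ⊗ₘ Kernel.infinitePi fun _ : ι => κ := by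
  have hZ : Measurable fun ω => (Y₀ ω, fun i => Y i ω) := hY₀.prodMk (measurable_pi_lambda _ hY)
  have hC : IsPiSystem (squareCylinders fun _ : ι => {B : Set β | MeasurableSet B}) :=
    isPiSystem_squareCylinders (fun _ => MeasurableSpace.isPiSystem_measurableSet) fun _ => .univ
  refine ext_of_generate_finite _ ?_ (MeasurableSpace.isPiSystem_measurableSet.prod hC) ?_ ?_
  · rw [← generateFrom_prod_eq isCountablySpanning_measurableSet
      (isCountablySpanning_squareCylinders fun _ => .univ),
      MeasurableSpace.generateFrom_measurableSet, generateFrom_squareCylinders]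
  · rintro _ ⟨B₀, hB₀, _, ⟨s, B, hB, rfl⟩, rfl⟩
    simp only [Set.mem_univ_pi, Set.mem_ofPred_eq] at hB hB₀
    have hpi : MeasurableSet ((s : Set ι).pi B) := .pi s.countable_toSet fun i _ => hB i
    have hpre : (fun ω => (Y₀ ω, fun i => Y i ω)) ⁻¹' (B₀ ×ˢ (s : Set ι).pi B)
        = Y₀ ⁻¹' B₀ ∩ ⋂ i ∈ s, Y i ⁻¹' B i := by
      ext ω; simp
    rw [Measure.map_apply hZ (hB₀.prod hpi), hpre, h B₀ s B hB₀ hB,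
      Measure.compProd_apply_prod hB₀ hpi, setLIntegral_map hB₀ (Kernel.measurable_coe _ hpi) hY₀]
    simp_rw [Kernel.infinitePi_apply, Measure.infinitePi_pi _ fun i _ => hB i]
  · simp [Measure.map_apply hZ .univ, Measure.map_apply hY₀ .univ]

theorem ae_tendsto_average_infinitePi {α : Type*} [MeasurableSpace α] (η : Measure α)
    [IsProbabilityMeasure η] {f : α → ℝ} (hf : Measurable f) (hfi : Integrable f η) :
    ∀ᵐ ys ∂Measure.infinitePi (fun _ : ℕ => η),
      Tendsto (fun M : ℕ => (∑ m ∈ range M, f (ys m)) / M) atTop (𝓝 (∫ y, f y ∂η)) := by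
  have hident : ∀ m,
      IdentDistrib (fun ys : ℕ → α => f (ys m)) f (Measure.infinitePi fun _ => η) η :=
    fun m => IdentDistrib.comp (u := f)
      ⟨(measurable_pi_apply m).aemeasurable, aemeasurable_id,
        (measurePreserving_eval_infinitePi _ m).map_eq.trans Measure.map_id'.symm⟩ hf
  have hindep := iIndepFun_infinitePi (P := fun _ : ℕ => η) fun _ => hf
  have hlln := strong_law_ae_real (fun (m : ℕ) (ys : ℕ → α) => f (ys m))
    ((hident 0).integrable_iff.mpr hfi) (fun _ _ hij => hindep.indepFun hij)
    fun m => (hident m).trans (hident 0).symm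
  rwa [(hident 0).integral_eq] at hlln

theorem ae_tendsto_average_of_condIID {Ω α β : Type*} [MeasurableSpace Ω] [MeasurableSpace α]
    [MeasurableSpace β] {μ : Measure Ω} [IsFiniteMeasure μ] {κ : Kernel α β} [IsMarkovKernel κ]
    {Y₀ : Ω → α} {Y : ℕ → Ω → β} (hY₀ : Measurable Y₀) (hY : ∀ m, Measurable (Y m))
    (h : CondIID μ κ Y₀ Y) {f : β → ℝ} (hf : Measurable f) (hfi : ∀ a, Integrable f (κ a)) :
    ∀ᵐ ω ∂μ, Tendsto (fun M : ℕ => (∑ m ∈ range M, f (Y m ω)) / M) atTop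
      (𝓝 (∫ y, f y ∂κ (Y₀ ω))) := by
  have hZ : Measurable fun ω => (Y₀ ω, fun m => Y m ω) := hY₀.prodMk (measurable_pi_lambda _ hY)
  have hconv : MeasurableSet {z : α × (ℕ → β) |
      Tendsto (fun M : ℕ => (∑ m ∈ range M, f (z.2 m)) / M) atTop (𝓝 (∫ y, f y ∂κ z.1))} :=
    measurableSet_tendsto_fun (fun M => by fun_prop)
      (hf.stronglyMeasurable.integral_kernel.measurable.comp measurable_fst)
  have hlln : ∀ᵐ z ∂(μ.map Y₀ ⊗ₘ Kernel.infinitePi fun _ : ℕ => κ),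
      Tendsto (fun M : ℕ => (∑ m ∈ range M, f (z.2 m)) / M) atTop (𝓝 (∫ y, f y ∂κ z.1)) :=
    (Measure.ae_compProd_iff hconv).mpr
      (ae_of_all _ fun a => ae_tendsto_average_infinitePi (κ a) hf (hfi a))
  rw [← map_prodMk_eq_compProd_infinitePi hY₀ hY h] at hlln
  exact (ae_map_iff hZ.aemeasurable hconv).mp hlln

end ProbabilityTheory

theorem tendsto_mul_div_add_sum {a : ℕ → ℝ} {L : ℝ} (x : ℝ) (hL : L ≠ 0)
    (ha : Tendsto (fun M : ℕ => (∑ m ∈ range M, a m) / M) atTop (𝓝 L)) :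
    Tendsto (fun M : ℕ => ((M : ℝ) + 1) * x / (x + ∑ m ∈ range M, a m)) atTop (𝓝 (x / L)) := by
  have hden : Tendsto (fun M : ℕ => (x + ∑ m ∈ range M, a m) / ((M : ℝ) + 1)) atTop (𝓝 L) := by
    have hlim := ((tendsto_const_nhds (x := x)).div_atTop (tendsto_atTop_add_const_right _ 1
      tendsto_natCast_atTop_atTop)).add (ha.mul (tendsto_natCast_div_add_atTop (1 : ℝ)))
    rw [zero_add, mul_one] at hlim
    refine hlim.congr' ?_
    filter_upwards [eventually_ne_atTop 0] with M hM
    field_simp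
  refine (tendsto_const_nhds.div hden hL).congr fun M => ?_
  rw [Pi.div_apply, div_div_eq_mul_div, mul_comm]

theorem tendsto_mul_div_add_sum_mul {a : ℕ → ℝ} {L c : ℝ} (x : ℝ) (hc : c ≠ 0) (hL : L ≠ 0)
    (ha : Tendsto (fun M : ℕ => (∑ m ∈ range M, a m) / M) atTop (𝓝 L)) :
    Tendsto (fun M : ℕ => ((M : ℝ) + 1) * (c * x) / (c * x + ∑ m ∈ range M, c * a m))
      atTop (𝓝 (x / L)) := by
  refine (tendsto_mul_div_add_sum x hL ha).congr fun M => ?_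
  rw [← mul_sum, ← mul_add, mul_left_comm, mul_div_mul_left _ _ hc]

theorem besag_clifford_ulr_process_limit_general
    {n : ℕ} (t : ℕ) {Ω : Type*} [MeasurableSpace Ω]
    (μ : Measure Ω) [IsProbabilityMeasure μ]
    (p q : (Fin n → ℝ) → ℝ) (hp : Measurable p) (hq : Measurable q)
    (UJ : Kernel (Fin n → ℝ) (Fin n → ℝ))
    [IsMarkovKernel UJ]
    (T : (Fin n → ℝ) → ℝ) (c : ℝ) (hc : 0 < c)
    (hTdef : ∀ x, T x = c * (q x / p x))
    (X : Fin t → Ω → (Fin n → ℝ)) (Y0 : Fin t → Ω → (Fin n → ℝ))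
    (Y : Fin t → ℕ → Ω → (Fin n → ℝ))
    (hY0 : ∀ i, Measurable (Y0 i))
    (hY : ∀ i m, Measurable (Y i m))
    -- conditionally on `Y_i⁽⁰⁾`, `Y_i⁽¹⁾, Y_i⁽²⁾, …` are i.i.d. from
    -- `U^J(Y_i⁽⁰⁾, ·)`, independent of `X_i`
    (hcond : ∀ (i : Fin t) (M : ℕ) (A : Set ((Fin n → ℝ) × (Fin n → ℝ)))
        (B : Fin M → Set (Fin n → ℝ)), MeasurableSet A → (∀ m, MeasurableSet (B m)) →
      μ ({ω | (X i ω, Y0 i ω) ∈ A} ∩ ⋂ m : Fin M, (Y i m.1) ⁻¹' (B m))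
        = ∫⁻ ω in {ω | (X i ω, Y0 i ω) ∈ A}, ∏ m : Fin M, UJ (Y0 i ω) (B m) ∂μ)
    -- `0 < Δ^J(y') < ∞` for every `y'`, and `Δ^J` is continuous
    (hΔpos : ∀ y', 0 < ∫ y, q y / p y ∂(UJ y'))
    (hΔfin : ∀ y', Integrable (fun y => q y / p y) (UJ y')) :
    ∀ᵐ ω ∂μ, Tendsto
      (fun M : ℕ => ∏ i : Fin t,
        ((M : ℝ) + 1) * T (X i ω) / (T (X i ω) + ∑ m ∈ Finset.range M, T (Y i m ω)))
      atTop
      (nhds ((∏ i : Fin t, q (X i ω) / p (X i ω)) /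
        ∏ i : Fin t, ∫ y, q y / p y ∂(UJ (Y0 i ω)))) := by
  have hcondIID : ∀ i, CondIID μ UJ (Y0 i) (Y i) := fun i =>
    condIID_of_forall_fin fun B₀ M B hB₀ hB =>
      hcond i M (Prod.snd ⁻¹' B₀) B (measurable_snd hB₀) hB
  have hlln : ∀ i, ∀ᵐ ω ∂μ, Tendsto (fun M : ℕ => (∑ m ∈ range M, q (Y i m ω) / p (Y i m ω)) / M)
      atTop (𝓝 (∫ y, q y / p y ∂UJ (Y0 i ω))) := fun i =>
    ae_tendsto_average_of_condIID (hY0 i) (hY i) (hcondIID i) (hq.div hp) hΔfin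
  filter_upwards [ae_all_iff.mpr hlln] with ω hω
  simp_rw [hTdef, ← prod_div_distrib]
  exact tendsto_finsetProd _ fun i _ =>
    tendsto_mul_div_add_sum_mul _ hc.ne' (hΔpos _).ne' (hω i)

/-- **Proposition 8, ULR process limit.**
Let `P, Q` have Lebesgue densities `p, q`, `Q ≪ P`, `E(x) = q(x)/p(x)`. For each
`i = 1, …, t`, independently across `i`: `X_i ~ W ∈ {P, Q}`,
`Y_i⁽⁰⁾ | X_i ~ V^J(X_i, ·)`, and conditionally on `Y_i⁽⁰⁾` the samples
`Y_i⁽¹⁾, Y_i⁽²⁾, …` are i.i.d. from `U^J(Y_i⁽⁰⁾, ·)`, independent of `X_i`. Let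
`Û_i = (M+1)·T(X_i)/(T(X_i) + Σ_{m=1}^M T(Y_i⁽ᵐ⁾))` with `T = c·q/p`, `c > 0`, and
`Ê_t = Π_{i=1}^t Û_i`. If `Δ^J(y') = ∫ (q/p) dU^J(y',·)` lies in `(0, ∞)` and is
continuous in `y'`, then for fixed `t`, as `M → ∞`, `Ê_t` converges almost surely
to `(Π_i E(X_i)) / (Π_i Δ^J(Y_i⁽⁰⁾))`. -/
theorem besag_clifford_ulr_process_limit
    {n : ℕ} (t : ℕ) {Ω : Type*} [MeasurableSpace Ω]
    (μ : Measure Ω) [IsProbabilityMeasure μ]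
    (P Q W : Measure (Fin n → ℝ))
    [IsProbabilityMeasure P] [IsProbabilityMeasure Q]
    (p q : (Fin n → ℝ) → ℝ) (hp : Measurable p) (hq : Measurable q)
    (hp0 : ∀ x, 0 ≤ p x) (hq0 : ∀ x, 0 ≤ q x)
    (hP : P = volume.withDensity (fun x => ENNReal.ofReal (p x)))
    (hQ : Q = volume.withDensity (fun x => ENNReal.ofReal (q x)))
    (hQP : Q ≪ P)
    (UJ VJ : Kernel (Fin n → ℝ) (Fin n → ℝ))
    [IsMarkovKernel UJ] [IsMarkovKernel VJ]
    (T : (Fin n → ℝ) → ℝ) (c : ℝ) (hc : 0 < c)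
    (hTdef : ∀ x, T x = c * (q x / p x))
    (X : Fin t → Ω → (Fin n → ℝ)) (Y0 : Fin t → Ω → (Fin n → ℝ))
    (Y : Fin t → ℕ → Ω → (Fin n → ℝ))
    (hX : ∀ i, Measurable (X i)) (hY0 : ∀ i, Measurable (Y0 i))
    (hY : ∀ i m, Measurable (Y i m))
    (hW : W = P ∨ W = Q)
    -- the tuples `(X_i, Y_i⁽⁰⁾, (Y_i⁽ᵐ⁾)_m)` are independent across `i`
    (hindep : iIndepFun
      (fun (i : Fin t) (ω : Ω) => (X i ω, Y0 i ω, fun m : ℕ => Y i m ω)) μ)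
    -- for each `i`: `X_i ~ W` and `Y_i⁽⁰⁾ | X_i ~ V^J(X_i, ·)`
    (hXlaw : ∀ i, Measure.map (X i) μ = W)
    (hXY0law : ∀ i, Measure.map (fun ω => (X i ω, Y0 i ω)) μ = W ⊗ₘ VJ)
    -- conditionally on `Y_i⁽⁰⁾`, `Y_i⁽¹⁾, Y_i⁽²⁾, …` are i.i.d. from
    -- `U^J(Y_i⁽⁰⁾, ·)`, independent of `X_i`
    (hcond : ∀ (i : Fin t) (M : ℕ) (A : Set ((Fin n → ℝ) × (Fin n → ℝ)))
        (B : Fin M → Set (Fin n → ℝ)), MeasurableSet A → (∀ m, MeasurableSet (B m)) →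
      μ ({ω | (X i ω, Y0 i ω) ∈ A} ∩ ⋂ m : Fin M, (Y i m.1) ⁻¹' (B m))
        = ∫⁻ ω in {ω | (X i ω, Y0 i ω) ∈ A}, ∏ m : Fin M, UJ (Y0 i ω) (B m) ∂μ)
    -- `0 < Δ^J(y') < ∞` for every `y'`, and `Δ^J` is continuous
    (hΔpos : ∀ y', 0 < ∫ y, q y / p y ∂(UJ y'))
    (hΔfin : ∀ y', Integrable (fun y => q y / p y) (UJ y'))
    (hΔcont : Continuous (fun y' => ∫ y, q y / p y ∂(UJ y'))) :
    ∀ᵐ ω ∂μ, Tendsto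
      (fun M : ℕ => ∏ i : Fin t,
        ((M : ℝ) + 1) * T (X i ω) / (T (X i ω) + ∑ m ∈ Finset.range M, T (Y i m ω)))
      atTop
      (nhds ((∏ i : Fin t, q (X i ω) / p (X i ω)) /
        ∏ i : Fin t, ∫ y, q y / p y ∂(UJ (Y0 i ω)))) :=
  besag_clifford_ulr_process_limit_general t μ p q hp hq UJ T c hc hTdef X Y0 Y hY0 hY hcond hΔpos
    hΔfin
end

section
/- Let X be a random vector with law Q and T a nonnegative measurable statistic with 0 < E^Q[T(X)] < ∞ and log T(X) integrable under Q. Let T̃^{(1)}, ..., T̃^{(M)} be nonnegative random variables, independent of X, each with the same finite positive mean E[T̃] ∈ (0, ∞). Define Ê_M(X) = (M+1)·T(X) / (T(X) + Σ_{m=1}^M T̃^{(m)}). Suppose the random variable T(X)/(M+1) + Σ_{m=1}^M T̃^{(m)}/(M+1) is not almost surely constant under Q. Then E^Q[log Ê_M(X)] > E^Q[log T(X)] − log( M·E[T̃]/(M+1) + E^Q[T(X)]/(M+1) ). -/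
open MeasureTheory ProbabilityTheory Filter Finset

/-- **Theorem 3, e-power of normalized statistics.**
Let `X ~ Q` and `T` nonnegative with `0 < E^Q[T(X)] < ∞` and `log T(X)` integrable.
Let `T̃⁽¹⁾, …, T̃⁽ᴹ⁾` be nonnegative, independent of `X`, with common finite
positive mean `E[T̃]`. If `T(X)/(M+1) + Σ_m T̃⁽ᵐ⁾/(M+1)` is not a.s. constant, then
`E^Q[log Ê_M(X)] > E^Q[log T(X)] − log(M·E[T̃]/(M+1) + E^Q[T(X)]/(M+1))`,
where `Ê_M(X) = (M+1)·T(X)/(T(X) + Σ_m T̃⁽ᵐ⁾)`. -/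
theorem besag_clifford_epower_bound
    {n M : ℕ} {Ω : Type*} [MeasurableSpace Ω]
    -- `Qm` is the ambient probability measure, labelled `Q` in the paper
    (Qm : Measure Ω) [IsProbabilityMeasure Qm]
    (X : Ω → (Fin n → ℝ)) (hX : Measurable X)
    (T : (Fin n → ℝ) → ℝ) (hT : Measurable T) (hT0 : ∀ x, 0 ≤ T x)
    (hTpos : ∀ᵐ ω ∂Qm, 0 < T (X ω))
    (hTXint : Integrable (fun ω => T (X ω)) Qm)
    (hTXpos : 0 < ∫ ω, T (X ω) ∂Qm)
    (hlogTint : Integrable (fun ω => Real.log (T (X ω))) Qm)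
    (Ttil : Fin M → Ω → ℝ)
    (hTtilmeas : ∀ m, Measurable (Ttil m))
    (hTtil0 : ∀ m ω, 0 ≤ Ttil m ω)
    (hTtilint : ∀ m, Integrable (Ttil m) Qm)
    -- common finite positive mean
    (ETtil : ℝ) (hETtilpos : 0 < ETtil)
    (hmean : ∀ m, ∫ ω, Ttil m ω ∂Qm = ETtil)
    -- the simulations are independent of the data `X`
    (hindep : IndepFun (fun ω => fun m : Fin M => Ttil m ω) X Qm)
    -- the denominator is integrable-in-log and non-degenerate
    (hlogDint : Integrable (fun ω =>
      Real.log (T (X ω) / ((M : ℝ) + 1) + ∑ m : Fin M, Ttil m ω / ((M : ℝ) + 1))) Qm)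
    (hnondeg : ¬ ∃ r : ℝ,
      (fun ω => T (X ω) / ((M : ℝ) + 1) + ∑ m : Fin M, Ttil m ω / ((M : ℝ) + 1))
        =ᵐ[Qm] fun _ => r) :
    (∫ ω, Real.log
        (((M : ℝ) + 1) * T (X ω) / (T (X ω) + ∑ m : Fin M, Ttil m ω)) ∂Qm)
      > (∫ ω, Real.log (T (X ω)) ∂Qm) -
          Real.log ((M : ℝ) * ETtil / ((M : ℝ) + 1) +
            (∫ ω, T (X ω) ∂Qm) / ((M : ℝ) + 1)) := by

  set D : Ω → ℝ := fun ω => T (X ω) / ((M : ℝ) + 1) + ∑ m : Fin M, Ttil m ω / ((M : ℝ) + 1)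
    with hD
  have hM1 : (0:ℝ) < (M:ℝ) + 1 := by positivity
  have hDpos : ∀ᵐ ω ∂Qm, 0 < D ω := by
    filter_upwards [hTpos] with ω hω
    have hs : (0:ℝ) ≤ ∑ m : Fin M, Ttil m ω / ((M : ℝ) + 1) :=
      Finset.sum_nonneg fun m _ => div_nonneg (hTtil0 m ω) hM1.le
    have : 0 < T (X ω) / ((M : ℝ) + 1) := div_pos hω hM1
    simp only [hD]; linarith
  have hDint : Integrable D Qm := by
    apply Integrable.add (hTXint.div_const _)
    exact integrable_finset_sum _ fun m _ => (hTtilint m).div_const _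
  have hID : ∫ ω, D ω ∂Qm = (M : ℝ) * ETtil / ((M : ℝ) + 1) +
      (∫ ω, T (X ω) ∂Qm) / ((M : ℝ) + 1) := by
    rw [integral_add (hTXint.div_const _)
      (integrable_finset_sum _ fun m _ => (hTtilint m).div_const _),
      integral_div, integral_finset_sum _ fun m _ => (hTtilint m).div_const _]
    simp only [integral_div, hmean]
    rw [Finset.sum_const, Finset.card_univ, Fintype.card_fin, nsmul_eq_mul]
    ring
  have hIDpos : 0 < ∫ ω, D ω ∂Qm := by
    rw [hID]
    have h1 : (0:ℝ) ≤ (M : ℝ) * ETtil / ((M : ℝ) + 1) := by positivity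
    have h2 : (0:ℝ) < (∫ ω, T (X ω) ∂Qm) / ((M : ℝ) + 1) := div_pos hTXpos hM1
    linarith
  -- rewrite LHS integrand
  have hcongr : ∀ᵐ ω ∂Qm,
      Real.log (((M : ℝ) + 1) * T (X ω) / (T (X ω) + ∑ m : Fin M, Ttil m ω))
        = Real.log (T (X ω)) - Real.log (D ω) := by
    filter_upwards [hTpos, hDpos] with ω hT hDp
    have hDT : D ω = (T (X ω) + ∑ m : Fin M, Ttil m ω) / ((M : ℝ) + 1) := by
      simp only [hD]
      rw [add_div, Finset.sum_div]
    have : ((M : ℝ) + 1) * T (X ω) / (T (X ω) + ∑ m : Fin M, Ttil m ω)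
        = T (X ω) / D ω := by
      rw [hDT]
      have hden : (0:ℝ) < T (X ω) + ∑ m : Fin M, Ttil m ω := by
        have : (0:ℝ) ≤ ∑ m : Fin M, Ttil m ω := Finset.sum_nonneg fun m _ => hTtil0 m ω
        linarith
      field_simp
    rw [this, Real.log_div hT.ne' hDp.ne']
  rw [integral_congr_ae hcongr, integral_sub hlogTint hlogDint]
  have hkey : ∫ ω, Real.log (D ω) ∂Qm < Real.log (∫ ω, D ω ∂Qm) := by
    have hexpD : (fun ω => Real.exp (Real.log (D ω))) =ᵐ[Qm] D := by
      filter_upwards [hDpos] with ω hω using Real.exp_log hω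
    have hexpint : Integrable (fun ω => Real.exp (Real.log (D ω))) Qm :=
      hDint.congr hexpD.symm
    rcases strictConvexOn_exp.ae_eq_const_or_map_average_lt Real.continuous_exp.continuousOn
        isClosed_univ (Filter.Eventually.of_forall fun ω => Set.mem_univ _)
        hlogDint hexpint with h | h
    · exfalso
      apply hnondeg
      refine ⟨Real.exp (⨍ ω, Real.log (D ω) ∂Qm), ?_⟩
      have : D =ᵐ[Qm] fun _ => Real.exp (⨍ ω, Real.log (D ω) ∂Qm) := by
        filter_upwards [h, hDpos] with ω hω hDp
        simp only [Function.const_apply] at hω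
        rw [← Real.exp_log hDp, hω]
      exact this
    · rw [average_eq_integral, average_eq_integral] at h
      change Real.exp (∫ ω, Real.log (D ω) ∂Qm) < ∫ ω, Real.exp (Real.log (D ω)) ∂Qm at h
      rw [integral_congr_ae hexpD] at h
      exact (Real.lt_log_iff_exp_lt hIDpos).2 h
  rw [hID] at hkey
  linarith
end

section
/- Let P and Q be probability measures, X ~ Q, T a nonnegative statistic with E^P[T(X)] ≤ 1 (T is an e-value for P), E^Q[T(X)] ≤ 1, 0 < E^Q[T(X)], and log T(X) integrable under Q. Let Y^{(1)}, ..., Y^{(M)} be i.i.d. from P, independent of X, with 0 < E^P[T(Y^{(1)})] < ∞, and suppose T(X)/(M+1) + Σ_{m=1}^M T(Y^{(m)})/(M+1) is not almost surely constant under Q. Then for every M ∈ ℕ, the Besag-Clifford e-value Ê_M(X) = (M+1)·T(X) / (T(X) + Σ_{m=1}^M T(Y^{(m)})) satisfies E^Q[log Ê_M(X)] > E^Q[log T(X)]. -/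
open MeasureTheory ProbabilityTheory Filter Finset

lemma measurePreserving_eval_pi' {ι : Type*} [Fintype ι] {α : Type*} [MeasurableSpace α]
    (μ : Measure α) [IsProbabilityMeasure μ] (i : ι) :
    MeasurePreserving (Function.eval i) (Measure.pi fun _ : ι => μ) μ := by
  classical
  refine ⟨measurable_pi_apply i, ?_⟩
  ext s hs
  rw [Measure.map_apply (measurable_pi_apply i) hs, Set.eval_preimage,
    Measure.pi_pi]
  rw [Finset.prod_eq_single_of_mem i (Finset.mem_univ i)]
  · simp
  · intro j _ hj
    simp [Function.update_of_ne hj]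

/-- **Corollary 1, item 3: e-power domination for weak signals.**
Let `X ~ Q` and let `T` be a nonnegative statistic with `E^P[T(X)] ≤ 1`,
`E^Q[T(X)] ≤ 1`, `0 < E^Q[T(X)]`, and `log T(X)` integrable under `Q`. Let
`Y⁽¹⁾, …, Y⁽ᴹ⁾` be i.i.d. from `P`, independent of `X` (encoded via the product
measure `Q ⊗ P^{⊗M}` on pairs `(x, y⃗)`), with `0 < E^P[T(Y⁽¹⁾)] < ∞`, and suppose
the denominator `T(X)/(M+1) + Σ_m T(Y⁽ᵐ⁾)/(M+1)` is not a.s. constant. Then for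
every `M`, `E^Q[log Ê_M(X)] > E^Q[log T(X)]`, where
`Ê_M(X) = (M+1)·T(X)/(T(X) + Σ_m T(Y⁽ᵐ⁾))`. -/
theorem besag_clifford_epower_domination
    {n : ℕ}
    (P Q : Measure (Fin n → ℝ)) [IsProbabilityMeasure P] [IsProbabilityMeasure Q]
    (T : (Fin n → ℝ) → ℝ) (hT : Measurable T) (hT0 : ∀ x, 0 ≤ T x)
    (hTint_P : Integrable T P) (hTint_Q : Integrable T Q)
    -- `T` is an e-value for `P`: `E^P[T(X)] ≤ 1`, with `0 < E^P[T] < ∞`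
    (hTP : ∫ x, T x ∂P ≤ 1) (hTPpos : 0 < ∫ x, T x ∂P)
    -- the alternative is under-powered: `E^Q[T(X)] ≤ 1`, with `0 < E^Q[T]`
    (hTQ : ∫ x, T x ∂Q ≤ 1) (hTQpos : 0 < ∫ x, T x ∂Q)
    (hTposQ : ∀ᵐ x ∂Q, 0 < T x)
    (hlogTint : Integrable (fun x => Real.log (T x)) Q)
    -- for each `M`, the denominator is integrable-in-log and non-degenerate under
    -- the joint law `Q ⊗ P^{⊗M}` of `(X, (Y⁽¹⁾, …, Y⁽ᴹ⁾))`
    (hlogDint : ∀ M : ℕ, Integrable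
      (fun z : (Fin n → ℝ) × (Fin M → (Fin n → ℝ)) =>
        Real.log (T z.1 / ((M : ℝ) + 1) + ∑ m : Fin M, T (z.2 m) / ((M : ℝ) + 1)))
      (Q.prod (Measure.pi fun _ : Fin M => P)))
    (hnondeg : ∀ M : ℕ, ¬ ∃ r : ℝ,
      (fun z : (Fin n → ℝ) × (Fin M → (Fin n → ℝ)) =>
          T z.1 / ((M : ℝ) + 1) + ∑ m : Fin M, T (z.2 m) / ((M : ℝ) + 1))
        =ᵐ[Q.prod (Measure.pi fun _ : Fin M => P)] fun _ => r) :
    ∀ M : ℕ,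
      (∫ z : (Fin n → ℝ) × (Fin M → (Fin n → ℝ)),
          Real.log (((M : ℝ) + 1) * T z.1 / (T z.1 + ∑ m : Fin M, T (z.2 m)))
        ∂(Q.prod (Measure.pi fun _ : Fin M => P)))
      > ∫ x, Real.log (T x) ∂Q := by
  intro M
  set μ := Q.prod (Measure.pi fun _ : Fin M => P) with hμ
  haveI : IsProbabilityMeasure (Measure.pi fun _ : Fin M => P) := by infer_instance
  haveI : IsProbabilityMeasure μ := by rw [hμ]; infer_instance
  set D : (Fin n → ℝ) × (Fin M → (Fin n → ℝ)) → ℝ :=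
    fun z => T z.1 / ((M : ℝ) + 1) + ∑ m : Fin M, T (z.2 m) / ((M : ℝ) + 1) with hD
  have hM1 : (0:ℝ) < (M : ℝ) + 1 := by positivity
  -- measure preserving maps
  have MPfst : MeasurePreserving (Prod.fst) μ Q := ⟨measurable_fst, Measure.fst_prod⟩
  have MPsnd : MeasurePreserving (Prod.snd) μ (Measure.pi fun _ : Fin M => P) :=
    ⟨measurable_snd, Measure.snd_prod⟩
  have MPm : ∀ m : Fin M, MeasurePreserving (fun z : (Fin n → ℝ) × (Fin M → (Fin n → ℝ)) => z.2 m)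
      μ P := fun m => (measurePreserving_eval_pi' P m).comp MPsnd
  -- integrability of the pieces
  have hT1int : Integrable (fun z : (Fin n → ℝ) × (Fin M → (Fin n → ℝ)) => T z.1) μ :=
    (MPfst.integrable_comp hTint_Q.aestronglyMeasurable).mpr hTint_Q
  have hTmint : ∀ m : Fin M,
      Integrable (fun z : (Fin n → ℝ) × (Fin M → (Fin n → ℝ)) => T (z.2 m)) μ := fun m =>
    ((MPm m).integrable_comp hTint_P.aestronglyMeasurable).mpr hTint_P
  have hDint : Integrable D μ := by
    refine ((hT1int.div_const _).add ?_)
    exact integrable_finset_sum _ fun m _ => (hTmint m).div_const _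
  have hlogDintD : Integrable (fun z => Real.log (D z)) μ := hlogDint M
  -- integrals of the pieces
  have hT1eq : ∫ z, T z.1 ∂μ = ∫ x, T x ∂Q := by
    rw [← MPfst.map_eq]
    exact (integral_map measurable_fst.aemeasurable
      (by rw [MPfst.map_eq]; exact hTint_Q.aestronglyMeasurable)).symm
  have hTmeq : ∀ m : Fin M, ∫ z, T (z.2 m) ∂μ = ∫ x, T x ∂P := by
    intro m
    rw [← (MPm m).map_eq]
    exact (integral_map (MPm m).measurable.aemeasurable
      (by rw [(MPm m).map_eq]; exact hTint_P.aestronglyMeasurable)).symm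
  -- E[D] ≤ 1
  have hDle : ∫ z, D z ∂μ ≤ 1 := by
    have heq : ∫ z, D z ∂μ
        = (∫ x, T x ∂Q) / ((M : ℝ) + 1) + ∑ m : Fin M, (∫ x, T x ∂P) / ((M : ℝ) + 1) := by
      have : ∫ z, D z ∂μ = ∫ z, (T z.1 / ((M : ℝ) + 1)
          + ∑ m : Fin M, T (z.2 m) / ((M : ℝ) + 1)) ∂μ := rfl
      rw [this, integral_add (hT1int.div_const _)
        (integrable_finset_sum _ fun m _ => (hTmint m).div_const _),
        integral_finset_sum _ fun m _ => (hTmint m).div_const _]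
      rw [integral_div, hT1eq]
      congr 1
      exact Finset.sum_congr rfl fun m _ => by rw [integral_div, hTmeq m]
    rw [heq, Finset.sum_const, card_univ, Fintype.card_fin, nsmul_eq_mul]
    have h1 : (∫ x, T x ∂Q) / ((M : ℝ) + 1) ≤ 1 / ((M : ℝ) + 1) :=
      div_le_div_of_nonneg_right hTQ hM1.le |>.trans_eq rfl
    have h2 : (M : ℝ) * ((∫ x, T x ∂P) / ((M : ℝ) + 1)) ≤ (M : ℝ) * (1 / ((M : ℝ) + 1)) := by
      apply mul_le_mul_of_nonneg_left _ (Nat.cast_nonneg M)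
      exact div_le_div_of_nonneg_right hTP hM1.le |>.trans_eq rfl
    have h3 : 1 / ((M : ℝ) + 1) + (M : ℝ) * (1 / ((M : ℝ) + 1)) = 1 := by field_simp; ring
    linarith
  -- a.e. positivity
  have hT1pos : ∀ᵐ z ∂μ, 0 < T z.1 := MPfst.quasiMeasurePreserving.ae hTposQ
  have hDpos : ∀ᵐ z ∂μ, 0 < D z := by
    filter_upwards [hT1pos] with z hz
    have hsum : (0:ℝ) ≤ ∑ m : Fin M, T (z.2 m) / ((M : ℝ) + 1) :=
      Finset.sum_nonneg fun m _ => div_nonneg (hT0 _) hM1.le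
    have h4 : (0:ℝ) < T z.1 / ((M : ℝ) + 1) := div_pos hz hM1
    show 0 < T z.1 / ((M : ℝ) + 1) + ∑ m : Fin M, T (z.2 m) / ((M : ℝ) + 1)
    linarith
  -- the key strict inequality : ∫ log D < 0
  set g : (Fin n → ℝ) × (Fin M → (Fin n → ℝ)) → ℝ := fun z => D z - 1 - Real.log (D z) with hg
  have hgnn : 0 ≤ᵐ[μ] g := by
    filter_upwards [hDpos] with z hz
    have := Real.log_le_sub_one_of_pos hz
    show (0:ℝ) ≤ D z - 1 - Real.log (D z)
    linarith
  have hgint : Integrable g μ := (hDint.sub (integrable_const 1)).sub hlogDintD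
  have hgpos : 0 < ∫ z, g z ∂μ := by
    rcases lt_or_eq_of_le (integral_nonneg_of_ae hgnn) with h | h
    · exact h
    · exfalso
      have hg0 : g =ᵐ[μ] 0 := (integral_eq_zero_iff_of_nonneg_ae hgnn hgint).mp h.symm
      refine hnondeg M ⟨1, ?_⟩
      filter_upwards [hg0, hDpos] with z hz hzpos
      show D z = 1
      by_contra hne
      have hlt := Real.log_lt_sub_one_of_pos hzpos hne
      have : D z - 1 - Real.log (D z) = 0 := hz
      linarith
  have hintg : ∫ z, g z ∂μ = ∫ z, D z ∂μ - 1 - ∫ z, Real.log (D z) ∂μ := by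
    have h1 : Integrable (fun z => D z - 1) μ := hDint.sub (integrable_const 1)
    calc ∫ z, g z ∂μ = (∫ z, (D z - 1) ∂μ) - ∫ z, Real.log (D z) ∂μ :=
          integral_sub h1 hlogDintD
      _ = ∫ z, D z ∂μ - 1 - ∫ z, Real.log (D z) ∂μ := by
          rw [integral_sub hDint (integrable_const 1), integral_const]; simp
  have hlogDneg : ∫ z, Real.log (D z) ∂μ < 0 := by
    rw [hintg] at hgpos; linarith
  -- rewrite the target integrand
  have hlogT1int : Integrable (fun z : (Fin n → ℝ) × (Fin M → (Fin n → ℝ)) =>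
      Real.log (T z.1)) μ :=
    (MPfst.integrable_comp hlogTint.aestronglyMeasurable).mpr hlogTint
  have hcongr : ∫ z, Real.log (((M : ℝ) + 1) * T z.1 / (T z.1 + ∑ m : Fin M, T (z.2 m))) ∂μ
      = ∫ z, (Real.log (T z.1) - Real.log (D z)) ∂μ := by
    refine integral_congr_ae ?_
    filter_upwards [hT1pos, hDpos] with z hz hzD
    have hDalt : D z = (T z.1 + ∑ m : Fin M, T (z.2 m)) / ((M : ℝ) + 1) := by
      show T z.1 / ((M : ℝ) + 1) + ∑ m : Fin M, T (z.2 m) / ((M : ℝ) + 1) = _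
      rw [add_div, Finset.sum_div]
    have hrw : ((M : ℝ) + 1) * T z.1 / (T z.1 + ∑ m : Fin M, T (z.2 m)) = T z.1 / D z := by
      rw [hDalt, div_div_eq_mul_div]; ring
    rw [hrw, Real.log_div hz.ne' hzD.ne']
  have hlogT1eq : ∫ z, Real.log (T z.1) ∂μ = ∫ x, Real.log (T x) ∂Q := by
    rw [← MPfst.map_eq]
    exact (integral_map measurable_fst.aemeasurable
      (by rw [MPfst.map_eq]; exact hlogTint.aestronglyMeasurable)).symm
  have hfinal : ∫ z, Real.log (((M : ℝ) + 1) * T z.1 / (T z.1 + ∑ m : Fin M, T (z.2 m))) ∂μ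
      = ∫ x, Real.log (T x) ∂Q - ∫ z, Real.log (D z) ∂μ := by
    rw [hcongr, integral_sub hlogT1int hlogDintD, hlogT1eq]
  show _ > _
  rw [hfinal]
  linarith
end

section
/- Let P and Q be probability measures, X ~ Q, T a nonnegative statistic with E^P[T(X)] < 1, 0 < E^Q[T(X)] < ∞, and log T(X) integrable under Q. Let Y^{(1)}, Y^{(2)}, ... be i.i.d. from P, independent of X, with E[T̃] := E^P[T(Y^{(1)})] = E^P[T(X)] < 1, and suppose for each M the variable T(X)/(M+1) + Σ_{m=1}^M T(Y^{(m)})/(M+1) is not almost surely constant under Q. Define M_*^Q = min{ M ∈ ℕ : E^Q[T(X)] − 1 < M·(1 − E[T̃]) }. Then M_*^Q is finite, and for every M ≥ M_*^Q, the Besag-Clifford e-value Ê_M(X) = (M+1)·T(X) / (T(X) + Σ_{m=1}^M T(Y^{(m)})) satisfies E^Q[log Ê_M(X)] > E^Q[log T(X)]. -/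
open MeasureTheory ProbabilityTheory Filter Finset

/-!
Writing `D` for the average of `T` over the observation and the `M` samples, the
Besag–Clifford e-value is `T(X) / D`, so its e-power is `E^Q[log T] - E[log D]`. Since
`log D ≤ D - 1` and `E[D] = (E^Q[T] + M · E^P[T]) / (M + 1)`, the correction `E[log D]` is
negative as soon as `E[D] < 1`, i.e. as soon as `E^Q[T] - 1 < M · (1 - E^P[T])`.
-/

theorem integral_log_lt_zero_of_integral_lt_one {Ω : Type*} [MeasurableSpace Ω]
    {μ : Measure Ω} [IsProbabilityMeasure μ] {f : Ω → ℝ} (hf : Integrable f μ)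
    (hlog : Integrable (fun ω => Real.log (f ω)) μ) (hpos : ∀ᵐ ω ∂μ, 0 < f ω)
    (hlt : ∫ ω, f ω ∂μ < 1) :
    ∫ ω, Real.log (f ω) ∂μ < 0 :=
  calc ∫ ω, Real.log (f ω) ∂μ ≤ ∫ ω, (f ω - 1) ∂μ :=
        integral_mono_ae hlog (hf.sub (integrable_const 1)) <| by
          filter_upwards [hpos] with ω hω using Real.log_le_sub_one_of_pos hω
    _ = ∫ ω, f ω ∂μ - 1 := by simp [integral_sub hf (integrable_const 1)]
    _ < 0 := by linarith

theorem setOf_lt_natCast_mul_nonempty (a : ℝ) {c : ℝ} (hc : 0 < c) :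
    {k : ℕ | a < k * c}.Nonempty := by
  obtain ⟨k, hk⟩ := exists_lt_nsmul hc a
  exact ⟨k, by simpa [nsmul_eq_mul] using hk⟩

theorem lt_natCast_mul_of_sInf_le {a c : ℝ} (hc : 0 < c) {M : ℕ}
    (hM : sInf {k : ℕ | a < k * c} ≤ M) : a < M * c :=
  (Nat.sInf_mem (setOf_lt_natCast_mul_nonempty a hc)).trans_le <|
    mul_le_mul_of_nonneg_right (Nat.cast_le.mpr hM) hc.le

section BesagClifford

variable {α : Type*} {T : α → ℝ} {M : ℕ}

noncomputable def besagCliffordAverage (T : α → ℝ) (M : ℕ) (z : α × (Fin M → α)) : ℝ :=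
  T z.1 / ((M : ℝ) + 1) + ∑ m : Fin M, T (z.2 m) / ((M : ℝ) + 1)

theorem besagCliffordAverage_eq (T : α → ℝ) (M : ℕ) (z : α × (Fin M → α)) :
    besagCliffordAverage T M z = (T z.1 + ∑ m : Fin M, T (z.2 m)) / ((M : ℝ) + 1) := by
  rw [besagCliffordAverage, add_div, Finset.sum_div]

theorem besagCliffordAverage_pos (hT0 : ∀ x, 0 ≤ T x) {z : α × (Fin M → α)}
    (hz : 0 < T z.1) : 0 < besagCliffordAverage T M z := by
  have hsum : 0 ≤ ∑ m : Fin M, T (z.2 m) := Finset.sum_nonneg fun m _ => hT0 (z.2 m)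
  rw [besagCliffordAverage_eq]
  exact div_pos (by linarith) (by positivity)

theorem log_besagClifford_eq_sub (hT0 : ∀ x, 0 ≤ T x) {z : α × (Fin M → α)}
    (hz : 0 < T z.1) :
    Real.log (((M : ℝ) + 1) * T z.1 / (T z.1 + ∑ m : Fin M, T (z.2 m)))
      = Real.log (T z.1) - Real.log (besagCliffordAverage T M z) := by
  rw [← Real.log_div hz.ne' (besagCliffordAverage_pos hT0 hz).ne', besagCliffordAverage_eq,
    div_div_eq_mul_div, mul_comm]

variable [MeasurableSpace α] {P Q : Measure α} [IsProbabilityMeasure P] [IsProbabilityMeasure Q]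

theorem integrable_besagCliffordAverage (hP : Integrable T P) (hQ : Integrable T Q) (M : ℕ) :
    Integrable (besagCliffordAverage T M) (Q.prod (Measure.pi fun _ : Fin M => P)) :=
  ((hQ.comp_fst _).div_const _).add <| integrable_finsetSum _ fun _ _ =>
    ((integrable_comp_eval hP).comp_snd Q).div_const _

theorem integral_besagCliffordAverage (hP : Integrable T P) (hQ : Integrable T Q) (M : ℕ) :
    ∫ z, besagCliffordAverage T M z ∂(Q.prod (Measure.pi fun _ : Fin M => P))
      = (∫ x, T x ∂Q + M * ∫ x, T x ∂P) / ((M : ℝ) + 1) := by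
  have hsamples : ∀ m : Fin M,
      ∫ z, T (z.2 m) ∂(Q.prod (Measure.pi fun _ : Fin M => P)) = ∫ x, T x ∂P := fun m => by
    rw [integral_fun_snd (fun y : Fin M → α => T (y m)),
      integral_comp_eval hP.aestronglyMeasurable]
    simp
  simp_rw [besagCliffordAverage_eq]
  rw [integral_div, integral_add (hQ.comp_fst _)
      (integrable_finsetSum _ fun _ _ => (integrable_comp_eval hP).comp_snd Q),
    integral_finsetSum _ fun _ _ => (integrable_comp_eval hP).comp_snd Q, integral_fun_fst]
  simp [hsamples]

theorem integral_log_besagClifford_eq_sub {ν : Measure (Fin M → α)} [IsProbabilityMeasure ν]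
    (hT0 : ∀ x, 0 ≤ T x) (hpos : ∀ᵐ x ∂Q, 0 < T x)
    (hlogT : Integrable (fun x => Real.log (T x)) Q)
    (hlogA : Integrable (fun z => Real.log (besagCliffordAverage T M z)) (Q.prod ν)) :
    ∫ z, Real.log (((M : ℝ) + 1) * T z.1 / (T z.1 + ∑ m : Fin M, T (z.2 m))) ∂(Q.prod ν)
      = ∫ x, Real.log (T x) ∂Q
        - ∫ z, Real.log (besagCliffordAverage T M z) ∂(Q.prod ν) := by
  have hpos_fst : ∀ᵐ z ∂(Q.prod ν), 0 < T z.1 :=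
    Measure.quasiMeasurePreserving_fst.ae hpos
  rw [integral_congr_ae (hpos_fst.mono fun z hz => log_besagClifford_eq_sub hT0 hz),
    integral_sub (hlogT.comp_fst _) hlogA, integral_fun_fst fun x => Real.log (T x)]
  simp

end BesagClifford

theorem besag_clifford_epower_large_M_general
    {n : ℕ}
    (P Q : Measure (Fin n → ℝ)) [IsProbabilityMeasure P] [IsProbabilityMeasure Q]
    (T : (Fin n → ℝ) → ℝ) (hT0 : ∀ x, 0 ≤ T x)
    (hTint_P : Integrable T P) (hTint_Q : Integrable T Q)
    -- `E[T̃] = E^P[T] < 1`, with `0 < E^P[T]`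
    (hTP : ∫ x, T x ∂P < 1)
    (hTposQ : ∀ᵐ x ∂Q, 0 < T x)
    (hlogTint : Integrable (fun x => Real.log (T x)) Q)
    (hlogDint : ∀ M : ℕ, Integrable
      (fun z : (Fin n → ℝ) × (Fin M → (Fin n → ℝ)) =>
        Real.log (T z.1 / ((M : ℝ) + 1) + ∑ m : Fin M, T (z.2 m) / ((M : ℝ) + 1)))
      (Q.prod (Measure.pi fun _ : Fin M => P))) :
    {M : ℕ | (∫ x, T x ∂Q) - 1 < (M : ℝ) * (1 - ∫ x, T x ∂P)}.Nonempty ∧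
    ∀ M : ℕ,
      sInf {M : ℕ | (∫ x, T x ∂Q) - 1 < (M : ℝ) * (1 - ∫ x, T x ∂P)} ≤ M →
      (∫ z : (Fin n → ℝ) × (Fin M → (Fin n → ℝ)),
          Real.log (((M : ℝ) + 1) * T z.1 / (T z.1 + ∑ m : Fin M, T (z.2 m)))
        ∂(Q.prod (Measure.pi fun _ : Fin M => P)))
      > ∫ x, Real.log (T x) ∂Q := by
  have hgap : 0 < 1 - ∫ x, T x ∂P := by linarith
  refine ⟨setOf_lt_natCast_mul_nonempty _ hgap, fun M hM => ?_⟩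
  have hthreshold := lt_natCast_mul_of_sInf_le hgap hM
  have hmean : ∫ z, besagCliffordAverage T M z ∂(Q.prod (Measure.pi fun _ : Fin M => P)) < 1 := by
    rw [integral_besagCliffordAverage hTint_P hTint_Q, div_lt_one (by positivity)]
    linarith
  have hlog_neg := integral_log_lt_zero_of_integral_lt_one
    (integrable_besagCliffordAverage hTint_P hTint_Q M) (hlogDint M)
    ((Measure.quasiMeasurePreserving_fst.ae hTposQ).mono
      fun z hz => besagCliffordAverage_pos hT0 hz) hmean
  rw [integral_log_besagClifford_eq_sub hT0 hTposQ hlogTint (hlogDint M)]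
  linarith

/-- **Corollary 1, item 1: e-power domination for large `M`.**
Let `X ~ Q` and let `T` be nonnegative with `E^P[T(X)] < 1`, `0 < E^Q[T(X)] < ∞`,
and `log T(X)` integrable under `Q`. Let `Y⁽¹⁾, Y⁽²⁾, …` be i.i.d. from `P`,
independent of `X` (encoded via the product measure `Q ⊗ P^{⊗M}`), with
`E[T̃] = E^P[T] < 1`, and suppose for each `M` the denominator
`T(X)/(M+1) + Σ_m T(Y⁽ᵐ⁾)/(M+1)` is not a.s. constant. Then
`M_*^Q = min{M : E^Q[T(X)] − 1 < M·(1 − E[T̃])}` is finite (the set is nonempty),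
and for every `M ≥ M_*^Q`, `E^Q[log Ê_M(X)] > E^Q[log T(X)]`. -/
theorem besag_clifford_epower_large_M
    {n : ℕ}
    (P Q : Measure (Fin n → ℝ)) [IsProbabilityMeasure P] [IsProbabilityMeasure Q]
    (T : (Fin n → ℝ) → ℝ) (hT : Measurable T) (hT0 : ∀ x, 0 ≤ T x)
    (hTint_P : Integrable T P) (hTint_Q : Integrable T Q)
    -- `E[T̃] = E^P[T] < 1`, with `0 < E^P[T]`
    (hTP : ∫ x, T x ∂P < 1) (hTPpos : 0 < ∫ x, T x ∂P)
    -- `0 < E^Q[T] < ∞`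
    (hTQpos : 0 < ∫ x, T x ∂Q)
    (hTposQ : ∀ᵐ x ∂Q, 0 < T x)
    (hlogTint : Integrable (fun x => Real.log (T x)) Q)
    (hlogDint : ∀ M : ℕ, Integrable
      (fun z : (Fin n → ℝ) × (Fin M → (Fin n → ℝ)) =>
        Real.log (T z.1 / ((M : ℝ) + 1) + ∑ m : Fin M, T (z.2 m) / ((M : ℝ) + 1)))
      (Q.prod (Measure.pi fun _ : Fin M => P)))
    (hnondeg : ∀ M : ℕ, ¬ ∃ r : ℝ,
      (fun z : (Fin n → ℝ) × (Fin M → (Fin n → ℝ)) =>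
          T z.1 / ((M : ℝ) + 1) + ∑ m : Fin M, T (z.2 m) / ((M : ℝ) + 1))
        =ᵐ[Q.prod (Measure.pi fun _ : Fin M => P)] fun _ => r) :
    {M : ℕ | (∫ x, T x ∂Q) - 1 < (M : ℝ) * (1 - ∫ x, T x ∂P)}.Nonempty ∧
    ∀ M : ℕ,
      sInf {M : ℕ | (∫ x, T x ∂Q) - 1 < (M : ℝ) * (1 - ∫ x, T x ∂P)} ≤ M →
      (∫ z : (Fin n → ℝ) × (Fin M → (Fin n → ℝ)),
          Real.log (((M : ℝ) + 1) * T z.1 / (T z.1 + ∑ m : Fin M, T (z.2 m)))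
        ∂(Q.prod (Measure.pi fun _ : Fin M => P)))
      > ∫ x, Real.log (T x) ∂Q :=
  besag_clifford_epower_large_M_general P Q T hT0 hTint_P hTint_Q hTP hTposQ hlogTint hlogDint
end

section
/- Let P be a probability measure, 𝒬 a family of probability measures, and T a nonnegative statistic with E^P[T(X)] < 1 and sup_{Q ∈ 𝒬} E^Q[T(X)] < ∞; assume additionally that for each Q ∈ 𝒬, 0 < E^Q[T(X)] and log T(X) is integrable under Q. Let Y^{(1)}, Y^{(2)}, ... be i.i.d. from P independent of X, with E[T̃] := E^P[T(Y^{(1)})] = E^P[T(X)], and suppose for each Q ∈ 𝒬 and each M the variable T(X)/(M+1) + Σ_{m=1}^M T(Y^{(m)})/(M+1) is not almost surely constant under Q. Then there exists M_* ∈ ℕ such that for all Q ∈ 𝒬 and all M ≥ M_*, the Besag-Clifford e-value Ê_M(X) = (M+1)·T(X) / (T(X) + Σ_{m=1}^M T(Y^{(m)})) satisfies E^Q[log Ê_M(X)] > E^Q[log T(X)]. -/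
open MeasureTheory

/-!
Write `D = (T(X) + ∑ₘ T(Y⁽ᵐ⁾)) / (M + 1)`, so that `Ê_M(X) = T(X) / D` and
`E^Q[log Ê_M] = E^Q[log T] - E[log D]`. The mean of `D` is
`(E^Q[T] + M · E^P[T]) / (M + 1) ≤ (C + M · E^P[T]) / (M + 1)`, which is at most `1` as soon as
`M ≥ (C - 1) / (1 - E^P[T])`, uniformly in `Q`. Since `D` is not a.s. constant, strict Jensen
for the logarithm gives `E[log D] < log E[D] ≤ 0`.
-/

theorem integral_log_lt_log_integral {α : Type*} [MeasurableSpace α] {μ : Measure α}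
    [IsProbabilityMeasure μ] {f : α → ℝ} (hf_pos : ∀ᵐ x ∂μ, 0 < f x) (hf : Integrable f μ)
    (hlog : Integrable (fun x ↦ Real.log (f x)) μ) (hf_nonconst : ¬ ∃ r : ℝ, f =ᵐ[μ] fun _ ↦ r) :
    ∫ x, Real.log (f x) ∂μ < Real.log (∫ x, f x ∂μ) := by
  have hexp_log : (fun x ↦ Real.exp (Real.log (f x))) =ᵐ[μ] f :=
    hf_pos.mono fun x hx ↦ Real.exp_log hx
  rcases strictConvexOn_exp.ae_eq_const_or_map_average_lt Real.continuous_exp.continuousOn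
      isClosed_univ (.of_forall fun _ ↦ Set.mem_univ _) hlog (hf.congr hexp_log.symm)
    with hconst | hlt
  · refine absurd ⟨Real.exp (⨍ x, Real.log (f x) ∂μ), ?_⟩ hf_nonconst
    filter_upwards [hconst, hf_pos] with x hx hx_pos
    rw [← Real.exp_log hx_pos, hx]
    rfl
  · rw [average_eq_integral, average_eq_integral, integral_congr_ae hexp_log] at hlt
    exact (Real.lt_log_iff_exp_lt ((Real.exp_pos _).trans hlt)).2 hlt

section BesagClifford

variable {α : Type*} {T : α → ℝ} {M : ℕ}

noncomputable def besagCliffordDenom (T : α → ℝ) (M : ℕ) (z : α × (Fin M → α)) : ℝ :=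
  T z.1 / ((M : ℝ) + 1) + ∑ m : Fin M, T (z.2 m) / ((M : ℝ) + 1)

theorem besagCliffordDenom_eq (z : α × (Fin M → α)) :
    besagCliffordDenom T M z = (T z.1 + ∑ m : Fin M, T (z.2 m)) / ((M : ℝ) + 1) := by
  rw [besagCliffordDenom, ← Finset.sum_div, ← add_div]

theorem besagCliffordDenom_pos (hT0 : ∀ x, 0 ≤ T x) {z : α × (Fin M → α)} (hz : 0 < T z.1) :
    0 < besagCliffordDenom T M z := by
  rw [besagCliffordDenom_eq]
  exact div_pos (add_pos_of_pos_of_nonneg hz (Finset.sum_nonneg fun _ _ ↦ hT0 _)) (by positivity)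

theorem log_besagClifford_eq (hT0 : ∀ x, 0 ≤ T x) {z : α × (Fin M → α)} (hz : 0 < T z.1) :
    Real.log (((M : ℝ) + 1) * T z.1 / (T z.1 + ∑ m : Fin M, T (z.2 m))) =
      Real.log (T z.1) - Real.log (besagCliffordDenom T M z) := by
  have hD := besagCliffordDenom_pos hT0 hz
  rw [← Real.log_div hz.ne' hD.ne', besagCliffordDenom_eq, div_div_eq_mul_div, mul_comm]

variable [MeasurableSpace α] {Q P : Measure α} [IsProbabilityMeasure Q] [IsProbabilityMeasure P]

theorem integrable_besagCliffordDenom (hTQ : Integrable T Q) (hTP : Integrable T P) :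
    Integrable (besagCliffordDenom T M) (Q.prod (Measure.pi fun _ : Fin M ↦ P)) :=
  ((hTQ.comp_fst _).div_const _).add <| integrable_finsetSum _ fun _ _ ↦
    ((integrable_comp_eval hTP).comp_snd Q).div_const _

theorem integral_besagCliffordDenom (hTQ : Integrable T Q) (hTP : Integrable T P) :
    ∫ z, besagCliffordDenom T M z ∂(Q.prod (Measure.pi fun _ : Fin M ↦ P)) =
      (∫ x, T x ∂Q + M * ∫ x, T x ∂P) / ((M : ℝ) + 1) := by
  have hY : ∀ m : Fin M, Integrable (fun z : α × (Fin M → α) ↦ T (z.2 m))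
      (Q.prod (Measure.pi fun _ : Fin M ↦ P)) :=
    fun m ↦ (integrable_comp_eval hTP).comp_snd Q
  have hY_integral : ∀ m : Fin M,
      ∫ z, T (z.2 m) ∂(Q.prod (Measure.pi fun _ : Fin M ↦ P)) = ∫ x, T x ∂P := fun m ↦ by
    rw [integral_fun_snd (fun y : Fin M → α ↦ T (y m)),
      integral_comp_eval (μ := fun _ ↦ P) hTP.1]
    simp
  simp_rw [besagCliffordDenom_eq]
  rw [integral_div, integral_add (hTQ.comp_fst _) (integrable_finsetSum _ fun m _ ↦ hY m),
    integral_finsetSum _ fun m _ ↦ hY m, integral_fun_fst]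
  simp [hY_integral]

theorem integral_besagCliffordDenom_le_one {C : ℝ} (hTQ : Integrable T Q) (hTP : Integrable T P)
    (hTQ_le : ∫ x, T x ∂Q ≤ C) (hTP_lt : ∫ x, T x ∂P < 1) (hM : (C - 1) / (1 - ∫ x, T x ∂P) ≤ M) :
    ∫ z, besagCliffordDenom T M z ∂(Q.prod (Measure.pi fun _ : Fin M ↦ P)) ≤ 1 := by
  rw [div_le_iff₀ (sub_pos.2 hTP_lt)] at hM
  rw [integral_besagCliffordDenom hTQ hTP, div_le_one (by positivity)]
  linarith

theorem integral_log_lt_integral_log_besagClifford (hT0 : ∀ x, 0 ≤ T x) (hTQ : Integrable T Q)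
    (hTP : Integrable T P) (hT_pos : ∀ᵐ x ∂Q, 0 < T x)
    (hlogT : Integrable (fun x ↦ Real.log (T x)) Q)
    (hlogD : Integrable (fun z ↦ Real.log (besagCliffordDenom T M z))
      (Q.prod (Measure.pi fun _ : Fin M ↦ P)))
    (hD_nonconst : ¬ ∃ r : ℝ,
      besagCliffordDenom T M =ᵐ[Q.prod (Measure.pi fun _ : Fin M ↦ P)] fun _ ↦ r)
    (hD_mean : ∫ z, besagCliffordDenom T M z ∂(Q.prod (Measure.pi fun _ : Fin M ↦ P)) ≤ 1) :
    ∫ x, Real.log (T x) ∂Q < ∫ z, Real.log (((M : ℝ) + 1) * T z.1 / (T z.1 + ∑ m : Fin M, T (z.2 m)))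
      ∂(Q.prod (Measure.pi fun _ : Fin M ↦ P)) := by
  have hX_pos : ∀ᵐ z ∂(Q.prod (Measure.pi fun _ : Fin M ↦ P)), 0 < T z.1 :=
    Measure.quasiMeasurePreserving_fst.ae hT_pos
  have hD_pos := hX_pos.mono fun _ ↦ besagCliffordDenom_pos hT0
  have hlogD_neg : ∫ z, Real.log (besagCliffordDenom T M z)
      ∂(Q.prod (Measure.pi fun _ : Fin M ↦ P)) < 0 :=
    (integral_log_lt_log_integral hD_pos (integrable_besagCliffordDenom hTQ hTP) hlogD
      hD_nonconst).trans_le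
      (Real.log_nonpos (integral_nonneg_of_ae (hD_pos.mono fun _ ↦ le_of_lt)) hD_mean)
  rw [integral_congr_ae (hX_pos.mono fun _ ↦ log_besagClifford_eq hT0),
    integral_sub (hlogT.comp_fst _) hlogD,
    integral_fun_fst (fun x ↦ Real.log (T x))]
  simp only [probReal_univ, one_smul]
  linarith

end BesagClifford

theorem besag_clifford_epower_uniform_general
    {n : ℕ}
    (P : Measure (Fin n → ℝ)) [IsProbabilityMeasure P]
    (𝒬 : Set (Measure (Fin n → ℝ))) (h𝒬prob : ∀ Q ∈ 𝒬, IsProbabilityMeasure Q)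
    (T : (Fin n → ℝ) → ℝ) (hT0 : ∀ x, 0 ≤ T x)
    (hTint_P : Integrable T P)
    (hTint_Q : ∀ Q ∈ 𝒬, Integrable T Q)
    -- `E[T̃] = E^P[T] < 1`, with `0 < E^P[T]`
    (hTP : ∫ x, T x ∂P < 1)
    -- `sup_{Q ∈ 𝒬} E^Q[T(X)] < ∞`
    (C : ℝ) (hsup : ∀ Q ∈ 𝒬, ∫ x, T x ∂Q ≤ C)
    -- for each `Q ∈ 𝒬`: `0 < E^Q[T]` and `log T(X)` is integrable under `Q`
    (hTposQ : ∀ Q ∈ 𝒬, ∀ᵐ x ∂Q, 0 < T x)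
    (hlogTint : ∀ Q ∈ 𝒬, Integrable (fun x => Real.log (T x)) Q)
    (hlogDint : ∀ Q ∈ 𝒬, ∀ M : ℕ, Integrable
      (fun z : (Fin n → ℝ) × (Fin M → (Fin n → ℝ)) =>
        Real.log (T z.1 / ((M : ℝ) + 1) + ∑ m : Fin M, T (z.2 m) / ((M : ℝ) + 1)))
      (Q.prod (Measure.pi fun _ : Fin M => P)))
    (hnondeg : ∀ Q ∈ 𝒬, ∀ M : ℕ, ¬ ∃ r : ℝ,
      (fun z : (Fin n → ℝ) × (Fin M → (Fin n → ℝ)) =>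
          T z.1 / ((M : ℝ) + 1) + ∑ m : Fin M, T (z.2 m) / ((M : ℝ) + 1))
        =ᵐ[Q.prod (Measure.pi fun _ : Fin M => P)] fun _ => r) :
    ∃ Mstar : ℕ, ∀ Q ∈ 𝒬, ∀ M : ℕ, Mstar ≤ M →
      (∫ z : (Fin n → ℝ) × (Fin M → (Fin n → ℝ)),
          Real.log (((M : ℝ) + 1) * T z.1 / (T z.1 + ∑ m : Fin M, T (z.2 m)))
        ∂(Q.prod (Measure.pi fun _ : Fin M => P)))
      > ∫ x, Real.log (T x) ∂Q := by
  refine ⟨⌈(C - 1) / (1 - ∫ x, T x ∂P)⌉₊, fun Q hQ M hM ↦ ?_⟩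
  have := h𝒬prob Q hQ
  exact integral_log_lt_integral_log_besagClifford hT0 (hTint_Q Q hQ) hTint_P (hTposQ Q hQ)
    (hlogTint Q hQ) (hlogDint Q hQ M) (hnondeg Q hQ M)
    (integral_besagCliffordDenom_le_one (hTint_Q Q hQ) hTint_P (hsup Q hQ) hTP
      ((Nat.le_ceil _).trans (by exact_mod_cast hM)))

/-- **Corollary 1, item 2: uniform e-power domination.**
Let `P` be a probability measure, `𝒬` a family of probability measures, and `T`
nonnegative with `E^P[T(X)] < 1` and `sup_{Q ∈ 𝒬} E^Q[T(X)] < ∞`; assume for each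
`Q ∈ 𝒬` that `0 < E^Q[T(X)]` and `log T(X)` is integrable under `Q`. Let
`Y⁽¹⁾, Y⁽²⁾, …` be i.i.d. from `P`, independent of `X` (encoded via the product
measure `Q ⊗ P^{⊗M}`), with `E[T̃] = E^P[T]`, and suppose for each `Q ∈ 𝒬` and
each `M` the denominator is not a.s. constant. Then there exists `M_* ∈ ℕ` such
that for all `Q ∈ 𝒬` and all `M ≥ M_*`,
`E^Q[log Ê_M(X)] > E^Q[log T(X)]`. -/
theorem besag_clifford_epower_uniform
    {n : ℕ}
    (P : Measure (Fin n → ℝ)) [IsProbabilityMeasure P]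
    (𝒬 : Set (Measure (Fin n → ℝ))) (h𝒬prob : ∀ Q ∈ 𝒬, IsProbabilityMeasure Q)
    (T : (Fin n → ℝ) → ℝ) (hT : Measurable T) (hT0 : ∀ x, 0 ≤ T x)
    (hTint_P : Integrable T P)
    (hTint_Q : ∀ Q ∈ 𝒬, Integrable T Q)
    -- `E[T̃] = E^P[T] < 1`, with `0 < E^P[T]`
    (hTP : ∫ x, T x ∂P < 1) (hTPpos : 0 < ∫ x, T x ∂P)
    -- `sup_{Q ∈ 𝒬} E^Q[T(X)] < ∞`
    (C : ℝ) (hsup : ∀ Q ∈ 𝒬, ∫ x, T x ∂Q ≤ C)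
    -- for each `Q ∈ 𝒬`: `0 < E^Q[T]` and `log T(X)` is integrable under `Q`
    (hTQpos : ∀ Q ∈ 𝒬, 0 < ∫ x, T x ∂Q)
    (hTposQ : ∀ Q ∈ 𝒬, ∀ᵐ x ∂Q, 0 < T x)
    (hlogTint : ∀ Q ∈ 𝒬, Integrable (fun x => Real.log (T x)) Q)
    (hlogDint : ∀ Q ∈ 𝒬, ∀ M : ℕ, Integrable
      (fun z : (Fin n → ℝ) × (Fin M → (Fin n → ℝ)) =>
        Real.log (T z.1 / ((M : ℝ) + 1) + ∑ m : Fin M, T (z.2 m) / ((M : ℝ) + 1)))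
      (Q.prod (Measure.pi fun _ : Fin M => P)))
    (hnondeg : ∀ Q ∈ 𝒬, ∀ M : ℕ, ¬ ∃ r : ℝ,
      (fun z : (Fin n → ℝ) × (Fin M → (Fin n → ℝ)) =>
          T z.1 / ((M : ℝ) + 1) + ∑ m : Fin M, T (z.2 m) / ((M : ℝ) + 1))
        =ᵐ[Q.prod (Measure.pi fun _ : Fin M => P)] fun _ => r) :
    ∃ Mstar : ℕ, ∀ Q ∈ 𝒬, ∀ M : ℕ, Mstar ≤ M →
      (∫ z : (Fin n → ℝ) × (Fin M → (Fin n → ℝ)),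
          Real.log (((M : ℝ) + 1) * T z.1 / (T z.1 + ∑ m : Fin M, T (z.2 m)))
        ∂(Q.prod (Measure.pi fun _ : Fin M => P)))
      > ∫ x, Real.log (T x) ∂Q :=
  besag_clifford_epower_uniform_general P 𝒬 h𝒬prob T hT0 hTint_P hTint_Q hTP C hsup hTposQ hlogTint
    hlogDint hnondeg
end

section
/- Fix μ ∈ ℝ, φ ∈ (−1, 1), and J ∈ ℕ, and let δ be a standard Gaussian random variable N(0,1) independent of X. Define Δ^J(X) = exp( φ^{2J}·μ·X + φ^J·μ·√(1 − φ^{2J})·δ − φ^{2J}·μ²/2 ). Then: (i) if X ~ N(0,1), E[Δ^J(X)] = 1; and (ii) if X ~ N(μ,1), E[1/Δ^J(X)] = 1. That is, Δ^J(X) is an exact e-variable for P = N(0,1) and 1/Δ^J(X) is an exact e-variable for Q = N(μ,1). -/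
open MeasureTheory ProbabilityTheory Filter Finset

open Real in
lemma ar1_pdf_mul_exp (m t x : ℝ) :
    gaussianPDFReal m 1 x * Real.exp (t * x)
      = Real.exp (t * m + t ^ 2 / 2) * gaussianPDFReal (m + t) 1 x := by
  simp only [gaussianPDFReal, NNReal.coe_one, mul_one]
  have h : -(x - m) ^ 2 / 2 + t * x = (t * m + t ^ 2 / 2) + (-(x - (m + t)) ^ 2 / 2) := by ring
  rw [mul_assoc, ← Real.exp_add, h, Real.exp_add]
  ring

lemma ar1_integral_exp_gaussianReal (m t : ℝ) :
    ∫ x, Real.exp (t * x) ∂(gaussianReal m 1) = Real.exp (t * m + t ^ 2 / 2) := by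
  rw [gaussianReal_of_var_ne_zero m one_ne_zero]
  have hpdf : gaussianPDF m 1
      = fun x => ((Real.toNNReal (gaussianPDFReal m 1 x) : NNReal) : ENNReal) := rfl
  rw [hpdf, integral_withDensity_eq_integral_smul
      (by exact (measurable_gaussianPDFReal m 1).real_toNNReal) _]
  have heq : ∀ x : ℝ, (Real.toNNReal (gaussianPDFReal m 1 x)) • Real.exp (t * x)
      = Real.exp (t * m + t ^ 2 / 2) * gaussianPDFReal (m + t) 1 x := by
    intro x
    rw [NNReal.smul_def, smul_eq_mul, Real.coe_toNNReal _ (gaussianPDFReal_nonneg m 1 x),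
      ar1_pdf_mul_exp]
  simp only [heq]
  rw [integral_const_mul, integral_gaussianPDFReal_eq_one (m + t) one_ne_zero, mul_one]

/-- **AR(1) mean-shift: `Δ^J(X)` is an exact e-variable.**
Fix `μ ∈ ℝ`, `φ ∈ (−1,1)`, `J ∈ ℕ`, and let `δ ~ N(0,1)` be independent of `X`
(encoded by product measures on `ℝ × ℝ` with coordinates `(X, δ)`). Define
`Δ^J(X) = exp(φ^{2J}·μ·X + φ^J·μ·√(1 − φ^{2J})·δ − φ^{2J}·μ²/2)`. Then:
(i) if `X ~ N(0,1)`, `E[Δ^J(X)] = 1`; and (ii) if `X ~ N(μ,1)`,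
`E[1/Δ^J(X)] = 1`. -/
theorem ar1_delta_exact_evalue
    (mu : ℝ) (φ : ℝ) (hφ : φ ∈ Set.Ioo (-1 : ℝ) 1) (J : ℕ) :
    -- (i) `Δ^J(X)` is an exact e-variable for `P = N(0,1)`
    (∫ z : ℝ × ℝ,
        Real.exp (φ ^ (2 * J) * mu * z.1 +
          φ ^ J * mu * Real.sqrt (1 - φ ^ (2 * J)) * z.2 -
          φ ^ (2 * J) * mu ^ 2 / 2)
      ∂((gaussianReal 0 1).prod (gaussianReal 0 1))) = 1 ∧
    -- (ii) `1/Δ^J(X)` is an exact e-variable for `Q = N(μ,1)`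
    (∫ z : ℝ × ℝ,
        (Real.exp (φ ^ (2 * J) * mu * z.1 +
          φ ^ J * mu * Real.sqrt (1 - φ ^ (2 * J)) * z.2 -
          φ ^ (2 * J) * mu ^ 2 / 2))⁻¹
      ∂((gaussianReal mu 1).prod (gaussianReal 0 1))) = 1 := by
  have hm : φ ^ (2 * J) = (φ ^ J) ^ 2 := by rw [mul_comm, pow_mul]
  have hq1 : φ ^ (2 * J) ≤ 1 := by
    rw [pow_mul]
    exact pow_le_one₀ (sq_nonneg φ) (by nlinarith [hφ.1, hφ.2])
  have hs : Real.sqrt (1 - φ ^ (2 * J)) ^ 2 = 1 - φ ^ (2 * J) :=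
    Real.sq_sqrt (by linarith)
  rw [hm] at hs
  have split : ∀ (a b c : ℝ) (z : ℝ × ℝ),
      Real.exp (a * z.1 + b * z.2 - c)
        = Real.exp (a * z.1) * (Real.exp (b * z.2) * Real.exp (-c)) := by
    intro a b c z
    rw [← Real.exp_add, ← Real.exp_add]
    congr 1; ring
  have split2 : ∀ (a b c : ℝ) (z : ℝ × ℝ),
      (Real.exp (a * z.1 + b * z.2 - c))⁻¹
        = Real.exp (-a * z.1) * (Real.exp (-b * z.2) * Real.exp c) := by
    intro a b c z
    rw [← Real.exp_add, ← Real.exp_add, ← Real.exp_neg]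
    congr 1; ring
  constructor
  · simp only [split]
    rw [integral_prod_mul (f := fun x => Real.exp (φ ^ (2 * J) * mu * x))
        (g := fun y => Real.exp (φ ^ J * mu * Real.sqrt (1 - φ ^ (2 * J)) * y) *
          Real.exp (-(φ ^ (2 * J) * mu ^ 2 / 2))),
      integral_mul_const, ar1_integral_exp_gaussianReal, ar1_integral_exp_gaussianReal,
      ← Real.exp_add, ← Real.exp_add]
    rw [Real.exp_eq_one_iff, hm]
    linear_combination ((φ ^ J) ^ 2 * mu ^ 2 / 2) * hs
  · simp only [split2]
    rw [integral_prod_mul (f := fun x => Real.exp (-(φ ^ (2 * J) * mu) * x))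
        (g := fun y => Real.exp (-(φ ^ J * mu * Real.sqrt (1 - φ ^ (2 * J))) * y) *
          Real.exp (φ ^ (2 * J) * mu ^ 2 / 2)),
      integral_mul_const, ar1_integral_exp_gaussianReal, ar1_integral_exp_gaussianReal,
      ← Real.exp_add, ← Real.exp_add]
    rw [Real.exp_eq_one_iff, hm]
    linear_combination ((φ ^ J) ^ 2 * mu ^ 2 / 2) * hs
end

section
/- Fix μ ∈ ℝ, φ ∈ (−1, 1), and J ∈ ℕ. Let X ~ N(μ, 1) and let Z ~ N(0,1) be independent of X, and define log Δ^J(X) = φ^{2J}·log E(X) + φ^J·μ·√(1 − φ^{2J})·Z, where E(x) = exp(μx − μ²/2) is the likelihood ratio of N(μ,1) against N(0,1). Then E[log Δ^J(X)] = φ^{2J}·μ²/2 = φ^{2J}·KL(N(μ,1), N(0,1)); in particular, the departure from log-optimality of E^J(X) = E(X)/Δ^J(X) satisfies E[log(E^J(X)/E(X))] = −φ^{2J}·μ²/2 = O(φ^{2J}). -/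
open MeasureTheory ProbabilityTheory Filter Finset

section Aux
open Real

lemma odd_gauss_int : ∫ y : ℝ, ProbabilityTheory.gaussianPDFReal 0 1 y * y = 0 := by
  have h := integral_neg_eq_self (fun y : ℝ => gaussianPDFReal 0 1 y * y) volume
  have heq : ∀ y : ℝ, gaussianPDFReal 0 1 (-y) * (-y) = -(gaussianPDFReal 0 1 y * y) := by
    intro y
    simp only [gaussianPDFReal]
    ring_nf
  simp only [heq, integral_neg] at h
  linarith

lemma integrable_pdf_mul_id : Integrable (fun y : ℝ => ProbabilityTheory.gaussianPDFReal 0 1 y * y) := by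
  have h : Integrable (fun y : ℝ => (Real.sqrt (2 * π))⁻¹ * (y * Real.exp (-(1/2) * y ^ 2))) :=
    (integrable_mul_exp_neg_mul_sq (by norm_num : (0:ℝ) < 1/2)).const_mul _
  refine h.congr (ae_of_all _ fun y => ?_)
  simp only [gaussianPDFReal]
  push_cast
  ring_nf

lemma gauss_mean (m : ℝ) : ∫ x, x ∂(gaussianReal m 1) = m := by
  rw [gaussianReal_of_var_ne_zero m one_ne_zero]
  have hmeas : Measurable fun x => (gaussianPDFReal m 1 x).toNNReal :=
    (measurable_gaussianPDFReal m 1).real_toNNReal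
  rw [show (gaussianPDF m 1) = fun x => ((gaussianPDFReal m 1 x).toNNReal : ENNReal) from rfl,
    integral_withDensity_eq_integral_smul hmeas]
  have hsm : ∀ x : ℝ, (gaussianPDFReal m 1 x).toNNReal • x = gaussianPDFReal m 1 x * x := by
    intro x
    rw [NNReal.smul_def, Real.coe_toNNReal _ (gaussianPDFReal_nonneg m 1 x), smul_eq_mul]
  simp only [hsm]
  have hshift := integral_add_right_eq_self (μ := (volume : Measure ℝ)) (fun x : ℝ => gaussianPDFReal m 1 x * x) m
  have heq : ∀ y : ℝ, gaussianPDFReal m 1 (y + m) * (y + m)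
      = gaussianPDFReal 0 1 y * y + gaussianPDFReal 0 1 y * m := by
    intro y
    have : gaussianPDFReal m 1 (y + m) = gaussianPDFReal 0 1 y := by
      rw [gaussianPDFReal_add]; norm_num
    rw [this]; ring
  rw [← hshift]
  simp only [heq]
  rw [integral_add integrable_pdf_mul_id ((integrable_gaussianPDFReal 0 1).mul_const m),
    odd_gauss_int, integral_mul_const, integral_gaussianPDFReal_eq_one 0 one_ne_zero]
  ring

lemma integrable_pdf_mul_id' (m : ℝ) :
    Integrable (fun x : ℝ => ProbabilityTheory.gaussianPDFReal m 1 x * x) := by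
  have h : Integrable (fun y : ℝ => gaussianPDFReal 0 1 y * y + gaussianPDFReal 0 1 y * m) :=
    integrable_pdf_mul_id.add ((integrable_gaussianPDFReal 0 1).mul_const m)
  have h2 := h.comp_sub_right m
  refine h2.congr (ae_of_all _ fun x => ?_)
  have hx : gaussianPDFReal 0 1 (x - m) = gaussianPDFReal m 1 x := by
    rw [gaussianPDFReal_sub]; norm_num
  simp only [hx]; ring

lemma integrable_id_gauss (m : ℝ) : Integrable (fun x : ℝ => x) (gaussianReal m 1) := by
  rw [gaussianReal_of_var_ne_zero m one_ne_zero,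
    show (gaussianPDF m 1) = fun x => ((gaussianPDFReal m 1 x).toNNReal : ENNReal) from rfl,
    integrable_withDensity_iff_integrable_coe_smul
      ((measurable_gaussianPDFReal m 1).real_toNNReal)]
  refine (integrable_pdf_mul_id' m).congr (ae_of_all _ fun x => ?_)
  simp only [NNReal.smul_def, Real.coe_toNNReal _ (gaussianPDFReal_nonneg m 1 x), smul_eq_mul]

lemma log_ratio (mu x : ℝ) :
    Real.log (ProbabilityTheory.gaussianPDFReal mu 1 x / ProbabilityTheory.gaussianPDFReal 0 1 x)
      = mu * x - mu ^ 2 / 2 := by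
  simp only [gaussianPDFReal]
  have hc : (Real.sqrt (2 * π * ((1 : NNReal) : ℝ)))⁻¹ ≠ 0 := by
    refine inv_ne_zero ?_
    positivity
  rw [mul_div_mul_left _ _ hc, ← Real.exp_sub, Real.log_exp]
  push_cast
  ring

lemma gauss_lin (mu a c : ℝ) :
    ∫ x, (a * x - c) ∂(gaussianReal mu 1) = a * mu - c := by
  rw [integral_sub ((integrable_id_gauss mu).const_mul a) (integrable_const c),
    integral_const_mul _, gauss_mean, integral_const]
  simp


end Aux

/-- **AR(1) mean-shift: e-power of `Δ^J` and departure from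
log-optimality.**
Fix `μ ∈ ℝ`, `φ ∈ (−1,1)`, `J ∈ ℕ`. Let `X ~ N(μ,1)` and `Z ~ N(0,1)` independent
(encoded by the product measure `N(μ,1) ⊗ N(0,1)` on `ℝ × ℝ`), and put
`log Δ^J(X) = φ^{2J}·log E(X) + φ^J·μ·√(1 − φ^{2J})·Z` with
`log E(x) = μx − μ²/2` the log likelihood ratio of `N(μ,1)` against `N(0,1)`.
Then `E[log Δ^J(X)] = φ^{2J}·μ²/2 = φ^{2J}·KL(N(μ,1), N(0,1))`; in particular the
departure from log-optimality is `E[log(E^J(X)/E(X))] = −E[log Δ^J(X)]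
= −φ^{2J}·μ²/2`. -/
theorem ar1_delta_epower
    (mu : ℝ) (φ : ℝ) (hφ : φ ∈ Set.Ioo (-1 : ℝ) 1) (J : ℕ) :
    -- `E[log Δ^J(X)] = φ^{2J}·μ²/2`
    (∫ z : ℝ × ℝ,
        (φ ^ (2 * J) * (mu * z.1 - mu ^ 2 / 2) +
          φ ^ J * mu * Real.sqrt (1 - φ ^ (2 * J)) * z.2)
      ∂((gaussianReal mu 1).prod (gaussianReal 0 1)))
        = φ ^ (2 * J) * mu ^ 2 / 2 ∧
    -- `… = φ^{2J}·KL(N(μ,1), N(0,1))`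
    (∫ z : ℝ × ℝ,
        (φ ^ (2 * J) * (mu * z.1 - mu ^ 2 / 2) +
          φ ^ J * mu * Real.sqrt (1 - φ ^ (2 * J)) * z.2)
      ∂((gaussianReal mu 1).prod (gaussianReal 0 1)))
        = φ ^ (2 * J) *
            ∫ x : ℝ, Real.log (gaussianPDFReal mu 1 x / gaussianPDFReal 0 1 x)
              ∂(gaussianReal mu 1) ∧
    -- departure from log-optimality: `E[log(E^J(X)/E(X))] = −φ^{2J}·μ²/2`
    (∫ z : ℝ × ℝ,
        -(φ ^ (2 * J) * (mu * z.1 - mu ^ 2 / 2) +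
          φ ^ J * mu * Real.sqrt (1 - φ ^ (2 * J)) * z.2)
      ∂((gaussianReal mu 1).prod (gaussianReal 0 1)))
        = -(φ ^ (2 * J) * mu ^ 2 / 2) := by
  set A : ℝ := φ ^ (2 * J) with hA
  set B : ℝ := φ ^ J * mu * Real.sqrt (1 - φ ^ (2 * J)) with hB
  set P := (gaussianReal mu 1).prod (gaussianReal 0 1) with hP
  have hf : Integrable (fun x : ℝ => A * (mu * x - mu ^ 2 / 2)) (gaussianReal mu 1) :=
    (((integrable_id_gauss mu).const_mul mu).sub (integrable_const _)).const_mul A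
  have hg : Integrable (fun y : ℝ => B * y) (gaussianReal 0 1) :=
    (integrable_id_gauss 0).const_mul B
  have h1 : Integrable (fun z : ℝ × ℝ => A * (mu * z.1 - mu ^ 2 / 2)) P := by
    have := hf.mul_prod (integrable_const (1 : ℝ)) (ν := gaussianReal 0 1)
    simpa using this
  have h2 : Integrable (fun z : ℝ × ℝ => B * z.2) P := by
    have := (integrable_const (1 : ℝ)).mul_prod hg (μ := gaussianReal mu 1)
    simpa using this
  have key : (∫ z : ℝ × ℝ, (A * (mu * z.1 - mu ^ 2 / 2) + B * z.2) ∂P)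
      = A * mu ^ 2 / 2 := by
    rw [integral_add h1 h2]
    have e1 : (∫ z : ℝ × ℝ, A * (mu * z.1 - mu ^ 2 / 2) ∂P)
        = ∫ x : ℝ, A * (mu * x - mu ^ 2 / 2) ∂(gaussianReal mu 1) := by
      rw [hP, integral_fun_fst (f := fun x : ℝ => A * (mu * x - mu ^ 2 / 2))]
      simp
    have e2 : (∫ z : ℝ × ℝ, B * z.2 ∂P) = ∫ y : ℝ, B * y ∂(gaussianReal 0 1) := by
      rw [hP, integral_fun_snd (f := fun y : ℝ => B * y)]
      simp
    rw [e1, e2, integral_const_mul _, gauss_lin, integral_const_mul _, gauss_mean]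
    ring
  refine ⟨key, ?_, ?_⟩
  · rw [key]
    have : (∫ x : ℝ, Real.log (gaussianPDFReal mu 1 x / gaussianPDFReal 0 1 x)
        ∂(gaussianReal mu 1)) = mu ^ 2 / 2 := by
      rw [show (fun x : ℝ => Real.log (gaussianPDFReal mu 1 x / gaussianPDFReal 0 1 x))
          = fun x : ℝ => mu * x - mu ^ 2 / 2 from funext fun x => log_ratio mu x,
        gauss_lin]
      ring
    rw [this]
    ring
  · rw [integral_neg, key]
end
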